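/- arXiv:2301.12784 — 4 statements merged into one kernel-verified Lean document; each statement's English description precedes it below -/
import Mathlib

section
/- Let n ≥ 5 be an integer and let 𝒢 = K₂ × K_n be the direct product of the complete graph on 2 vertices with the complete graph on n vertices. Then for every vertex subset A of 𝒢 with 2 ≤ |A| ≤ 2n − 2, the number of edges of 𝒢 with exactly one endpoint in A satisfies |[A, V(𝒢) \ A]| ≥ 2(n − 2); moreover, equality holds if and only if either (i) |A| = 2 and the subgraph of 𝒢 induced by A is isomorphic to K₂, or (ii) |A| = 2n − 2 and the subgraph of 𝒢 induced by V(𝒢) \ A is isomorphic to K₂. -/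
open SimpleGraph

/-- The direct (tensor/Kronecker) product of two simple graphs:
`(u₁, v₁)` and `(u₂, v₂)` are adjacent iff `u₁u₂ ∈ E(G)` and `v₁v₂ ∈ E(H)`. -/
def tensorProd {α β : Type*} (G : SimpleGraph α) (H : SimpleGraph β) :
    SimpleGraph (α × β) where
  Adj x y := G.Adj x.1 y.1 ∧ H.Adj x.2 y.2
  symm := ⟨fun _ _ h => ⟨h.1.symm, h.2.symm⟩⟩
  loopless := ⟨fun _ h => G.loopless.irrefl _ h.1⟩

/-- The direct product `G × Tₙ` of a simple graph `G` with the total graph `Tₙ`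
(the complete graph `Kₙ` with a loop added at every vertex):  since `Tₙ` has all
possible edges and loops, `(u₁, v₁)` is adjacent to `(u₂, v₂)` iff `u₁u₂ ∈ E(G)`. -/
def totalProd {α : Type*} (G : SimpleGraph α) (n : ℕ) :
    SimpleGraph (α × Fin n) where
  Adj x y := G.Adj x.1 y.1
  symm := ⟨fun _ _ h => h.symm⟩
  loopless := ⟨fun _ h => G.loopless.irrefl _ h⟩

/-- The direct product `K₂ × Kₙ`. -/
def K2timesKn (n : ℕ) : SimpleGraph (Fin 2 × Fin n) :=
  tensorProd (completeGraph (Fin 2)) (completeGraph (Fin n))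

/-- The direct product `K₂ × Tₙ` (isomorphic to the complete bipartite graph `K_{n,n}`). -/
def K2timesTn (n : ℕ) : SimpleGraph (Fin 2 × Fin n) :=
  totalProd (completeGraph (Fin 2)) n

/-- `[A, V ∖ A]` : the set of edges of `G` with exactly one endpoint in `A`. -/
def cutEdges {α : Type*} (G : SimpleGraph α) (A : Set α) : Set (Sym2 α) :=
  {e | e ∈ G.edgeSet ∧ ∃ u v, e = s(u, v) ∧ u ∈ A ∧ v ∉ A}

/-- `F` is an edge-cut of `G`: a set of edges whose deletion disconnects `G`. -/
def IsEdgeCut {α : Type*} (G : SimpleGraph α) (F : Set (Sym2 α)) : Prop :=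
  F ⊆ G.edgeSet ∧ ¬ (G.deleteEdges F).Connected

/-- The edge-connectivity `λ(G)`: the minimum cardinality of an edge-cut. -/
noncomputable def edgeConn {α : Type*} (G : SimpleGraph α) : ℕ :=
  sInf {k | ∃ F : Finset (Sym2 α), IsEdgeCut G ↑F ∧ F.card = k}

/-- `G` is super edge-connected (super-λ): every minimum edge-cut is exactly the
set of edges incident with some vertex. -/
def SuperEdgeConnected {α : Type*} (G : SimpleGraph α) : Prop :=
  ∀ F : Finset (Sym2 α), IsEdgeCut G ↑F → F.card = edgeConn G →
    ∃ v, (F : Set (Sym2 α)) = G.incidenceSet v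

/-- `F` is a restricted edge-cut of `G`: its deletion disconnects `G` and every
connected component of `G − F` has at least two vertices. -/
def IsRestrictedEdgeCut {α : Type*} (G : SimpleGraph α) (F : Set (Sym2 α)) : Prop :=
  F ⊆ G.edgeSet ∧ ¬ (G.deleteEdges F).Connected ∧
    ∀ c : (G.deleteEdges F).ConnectedComponent, c.supp.Nontrivial

/-- The restricted edge-connectivity `λ'(G) : ℕ∞`: the minimum cardinality of a
restricted edge-cut, and `+∞` (`⊤`) if no restricted edge-cut exists. -/
noncomputable def restrictedEdgeConn {α : Type*} (G : SimpleGraph α) : ℕ∞ :=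
  sInf {k : ℕ∞ | ∃ F : Finset (Sym2 α), IsRestrictedEdgeCut G ↑F ∧ (F.card : ℕ∞) = k}

/-- `G` is super restricted edge-connected (super-λ'): every minimum restricted
edge-cut isolates an edge, i.e. some component of `G − F` is a single edge. -/
def SuperRestrictedEdgeConnected {α : Type*} (G : SimpleGraph α) : Prop :=
  ∀ F : Finset (Sym2 α), IsRestrictedEdgeCut G ↑F →
    (F.card : ℕ∞) = restrictedEdgeConn G →
    ∃ u v, (G.deleteEdges ↑F).Adj u v ∧
      ((G.deleteEdges ↑F).connectedComponentMk u).supp = {u, v}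

/-- The minimum edge-degree `ξ(G) = min { d(u) + d(v) − 2 : uv ∈ E(G) }`. -/
noncomputable def minEdgeDegree {α : Type*} (G : SimpleGraph α) : ℕ :=
  sInf {k | ∃ u v, G.Adj u v ∧ (G.neighborSet u).ncard + (G.neighborSet v).ncard - 2 = k}

/-!
Let `a`, `b` be the numbers of vertices of `A` in the two layers `{0} × Kₙ` and `{1} × Kₙ`, and
`t` the number of columns `j` with both `(0, j)` and `(1, j)` in `A`. A vertex `(i, j) ∈ A` is
joined to every vertex of the other layer outside `A` except `(i + 1, j)`, so
`|[A, Aᶜ]| = a (n - b) + b (n - a) - (a + b) + 2t`.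
As `[A, Aᶜ] = [Aᶜ, A]`, we may assume `|A| = a + b ≤ n`, and then
`2 (|[A, Aᶜ]| - 2(n - 2)) = (a + b - 2)(2n - 4 - a - b) + (a - b)² + 4t ≥ 0`,
with equality exactly when `a = b = 1` and `t = 0`, i.e. when `A` is an edge.
-/

open Finset

section Cut

variable {α : Type*} (G : SimpleGraph α)

theorem cutEdges_compl (A : Set α) : cutEdges G Aᶜ = cutEdges G A := by
  ext e
  constructor <;>
  · rintro ⟨he, u, v, rfl, hu, hv⟩
    exact ⟨he, v, u, Sym2.eq_swap, by simpa using hv, by simpa using hu⟩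

theorem ncard_eq_two_and_nonempty_induce_iso_iff {A : Set α} :
    (A.ncard = 2 ∧ Nonempty (G.induce A ≃g completeGraph (Fin 2))) ↔
      ∃ x y, G.Adj x y ∧ A = {x, y} := by
  constructor
  · rintro ⟨hA, ⟨e⟩⟩
    obtain ⟨x, y, hxy, rfl⟩ := Set.ncard_eq_two.mp hA
    refine ⟨x, y, ?_, rfl⟩
    exact e.map_adj_iff.mp (e.injective.ne (by simpa using hxy) :
      e ⟨x, by simp⟩ ≠ e ⟨y, by simp⟩)
  · rintro ⟨x, y, hxy, rfl⟩
    refine ⟨Set.ncard_pair hxy.ne, ⟨?_⟩⟩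
    rw [induce_eq_top.mpr (isClique_pair.mpr fun _ => hxy)]
    exact Iso.completeGraph (Finite.equivFinOfCardEq (by rw [Nat.card_coe_set_eq,
      Set.ncard_pair hxy.ne]))

variable [Fintype α] [DecidableEq α]

def cutPairs [DecidableRel G.Adj] (A : Finset α) : Finset (α × α) :=
  {p | G.Adj p.1 p.2 ∧ p.1 ∈ A ∧ p.2 ∉ A}

@[simp]
theorem mem_cutPairs [DecidableRel G.Adj] {A : Finset α} {p : α × α} :
    p ∈ cutPairs G A ↔ G.Adj p.1 p.2 ∧ p.1 ∈ A ∧ p.2 ∉ A := by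
  simp [cutPairs]

theorem ncard_cutEdges_eq_card_cutPairs [DecidableRel G.Adj] (A : Finset α) :
    (cutEdges G A).ncard = #(cutPairs G A) := by
  have himage : cutEdges G A = (fun p : α × α => s(p.1, p.2)) '' ↑(cutPairs G A) := by
    ext e
    constructor
    · rintro ⟨he, u, v, rfl, hu, hv⟩
      exact ⟨(u, v), by simpa using ⟨he, hu, hv⟩, rfl⟩
    · rintro ⟨⟨u, v⟩, hp, rfl⟩
      rw [mem_coe, mem_cutPairs] at hp
      exact ⟨hp.1, u, v, rfl, hp.2⟩
  rw [himage, Set.InjOn.ncard_image, Set.ncard_coe_finset]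
  rintro ⟨u, v⟩ hp ⟨u', v'⟩ hp' he
  rw [mem_coe, mem_cutPairs] at hp hp'
  rcases Sym2.mk_eq_mk_iff.mp he with h | h
  · exact h
  · simp only [Prod.swap_prod_mk, Prod.mk.injEq] at h
    exact absurd (h.1 ▸ hp.2.1) hp'.2.2

theorem card_filter_ne_add_card_sdiff (S T : Finset α) :
    #{q ∈ S ×ˢ Tᶜ | q.1 ≠ q.2} + #(S \ T) = #S * (Fintype.card α - #T) := by
  have hdiag : #{q ∈ S ×ˢ Tᶜ | ¬q.1 ≠ q.2} = #(S \ T) :=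
    card_nbij' Prod.fst (fun j => (j, j)) (fun _ => by aesop) (fun _ => by aesop)
      (fun _ => by aesop) (fun _ => by aesop)
  rw [← hdiag, card_filter_add_card_filter_not, card_product, card_compl]

end Cut

theorem Fin.two_ne_iff {i j : Fin 2} : i ≠ j ↔ j = i + 1 := by
  revert i j
  decide

namespace K2timesKn

theorem cut_count_lower_bound {n a b t c : ℕ} (hn : 5 ≤ n) (h2 : 2 ≤ a + b) (hab : a + b ≤ n)
    (hc : c + a + b = a * (n - b) + b * (n - a) + 2 * t) :
    2 * (n - 2) ≤ c ∧ (c = 2 * (n - 2) → a = 1 ∧ b = 1 ∧ t = 0) := by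
  have hkey : 2 * ((c : ℤ) - (2 * n - 4)) =
      (a + b - 2) * (2 * n - 4 - (a + b)) + (a - b) ^ 2 + 4 * t := by
    zify [show a ≤ n by omega, show b ≤ n by omega] at hc
    linear_combination 2 * hc
  have hprod : 0 ≤ ((a : ℤ) + b - 2) * (2 * n - 4 - (a + b)) :=
    mul_nonneg (by omega) (by omega)
  refine ⟨by zify [show 2 ≤ n by omega]; nlinarith [sq_nonneg ((a : ℤ) - b)], fun heq => ?_⟩
  zify [show 2 ≤ n by omega] at heq
  have ht : t = 0 := by nlinarith [sq_nonneg ((a : ℤ) - b)]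
  have hab2 : a + b = 2 := by nlinarith [sq_nonneg ((a : ℤ) - b)]
  have hab' : a = b := by nlinarith [sq_nonneg ((a : ℤ) - b)]
  omega

variable {n : ℕ}

theorem adj_iff {x y : Fin 2 × Fin n} :
    (K2timesKn n).Adj x y ↔ x.1 ≠ y.1 ∧ x.2 ≠ y.2 := Iff.rfl

instance : DecidableRel (K2timesKn n).Adj := fun _ _ => decidable_of_iff _ adj_iff.symm

def slice (A : Finset (Fin 2 × Fin n)) (i : Fin 2) : Finset (Fin n) := {j | (i, j) ∈ A}

@[simp]
theorem mem_slice {A : Finset (Fin 2 × Fin n)} {i : Fin 2} {j : Fin n} :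
    j ∈ slice A i ↔ (i, j) ∈ A := by
  simp [slice]

theorem card_eq_card_slice_add_card_slice (A : Finset (Fin 2 × Fin n)) :
    #A = #(slice A 0) + #(slice A 1) := by
  rw [← Fin.sum_univ_two (fun i => #(slice A i)), card_eq_sum_card_fiberwise (f := Prod.fst)
    (fun _ _ => mem_univ _)]
  refine sum_congr rfl fun i _ => ?_
  refine card_nbij' Prod.snd (fun j => (i, j)) ?_ ?_ ?_ ?_ <;> intro x <;> aesop

theorem card_cutPairs (A : Finset (Fin 2 × Fin n)) :
    #(cutPairs (K2timesKn n) A) =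
      ∑ i : Fin 2, #{q ∈ slice A i ×ˢ (slice A (i + 1))ᶜ | q.1 ≠ q.2} := by
  rw [← card_sigma]
  refine card_nbij' (fun p => ⟨p.1.1, (p.1.2, p.2.2)⟩)
    (fun q => ((q.1, q.2.1), (q.1 + 1, q.2.2))) ?_ ?_ ?_ ?_
  all_goals
    rintro ⟨_, _⟩
    aesop (add simp [adj_iff, Fin.two_ne_iff])

theorem ncard_cutEdges_add_card_slice_add_card_slice (A : Finset (Fin 2 × Fin n)) :
    (cutEdges (K2timesKn n) A).ncard + #(slice A 0) + #(slice A 1) =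
      #(slice A 0) * (n - #(slice A 1)) + #(slice A 1) * (n - #(slice A 0)) +
        2 * #(slice A 0 ∩ slice A 1) := by
  have h0 := card_filter_ne_add_card_sdiff (slice A 0) (slice A 1)
  have h1 := card_filter_ne_add_card_sdiff (slice A 1) (slice A 0)
  have d0 := card_sdiff_add_card_inter (slice A 0) (slice A 1)
  have d1 := card_sdiff_add_card_inter (slice A 1) (slice A 0)
  rw [inter_comm] at d1
  rw [Fintype.card_fin] at h0 h1
  rw [ncard_cutEdges_eq_card_cutPairs, card_cutPairs, Fin.sum_univ_two, zero_add,
    show (1 : Fin 2) + 1 = 0 from rfl]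
  omega

theorem exists_adj_eq_pair_iff {A : Finset (Fin 2 × Fin n)} :
    (∃ x y, (K2timesKn n).Adj x y ∧ A = {x, y}) ↔
      #(slice A 0) = 1 ∧ #(slice A 1) = 1 ∧ #(slice A 0 ∩ slice A 1) = 0 := by
  constructor
  · rintro ⟨⟨i, j⟩, ⟨i', k⟩, hadj, rfl⟩
    obtain ⟨hi, hjk⟩ := adj_iff.mp hadj
    simp only [Fin.two_ne_iff] at hi hjk
    subst hi
    fin_cases i <;> simp [slice, filter_eq', hjk, Ne.symm hjk]
  · rintro ⟨ha, hb, ht⟩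
    obtain ⟨j, hj⟩ := card_eq_one.mp ha
    obtain ⟨k, hk⟩ := card_eq_one.mp hb
    have hjk : j ≠ k := by
      rintro rfl
      simp [hj, hk] at ht
    refine ⟨(0, j), (1, k), adj_iff.mpr ⟨by simp, hjk⟩, ?_⟩
    ext ⟨i, m⟩
    rw [← mem_slice]
    fin_cases i <;> simp [hj, hk]

theorem ncard_cutEdges_of_ncard_le (hn : 5 ≤ n) {A : Set (Fin 2 × Fin n)} (h2 : 2 ≤ A.ncard)
    (hA : A.ncard ≤ n) :
    2 * (n - 2) ≤ (cutEdges (K2timesKn n) A).ncard ∧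
      ((cutEdges (K2timesKn n) A).ncard = 2 * (n - 2) ↔
        A.ncard = 2 ∧ Nonempty ((K2timesKn n).induce A ≃g completeGraph (Fin 2))) := by
  lift A to Finset (Fin 2 × Fin n) using A.toFinite
  rw [Set.ncard_coe_finset, card_eq_card_slice_add_card_slice] at h2 hA
  have hformula := ncard_cutEdges_add_card_slice_add_card_slice A
  obtain ⟨hle, heq⟩ := cut_count_lower_bound hn h2 hA hformula
  refine ⟨hle, ?_⟩
  simp only [ncard_eq_two_and_nonempty_induce_iso_iff, ← coe_pair, coe_inj,
    exists_adj_eq_pair_iff]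
  refine ⟨heq, fun ⟨ha, hb, ht⟩ => ?_⟩
  rw [ha, hb, ht] at hformula
  omega

end K2timesKn

theorem stmt0 (n : ℕ) (hn : 5 ≤ n) (A : Set (Fin 2 × Fin n))
    (hA2 : 2 ≤ A.ncard) (hA2n : A.ncard ≤ 2 * n - 2) :
    2 * (n - 2) ≤ (cutEdges (K2timesKn n) A).ncard ∧
    ((cutEdges (K2timesKn n) A).ncard = 2 * (n - 2) ↔
      (A.ncard = 2 ∧ Nonempty ((K2timesKn n).induce A ≃g completeGraph (Fin 2))) ∨
      (A.ncard = 2 * n - 2 ∧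
        Nonempty ((K2timesKn n).induce Aᶜ ≃g completeGraph (Fin 2)))) := by
  have hcompl : A.ncard + Aᶜ.ncard = 2 * n := by simpa using Set.ncard_add_ncard_compl A
  rcases le_or_gt A.ncard n with hA | hA
  · obtain ⟨hle, heq⟩ := K2timesKn.ncard_cutEdges_of_ncard_le hn hA2 hA
    refine ⟨hle, heq.trans ⟨Or.inl, ?_⟩⟩
    rintro (h | ⟨h, -⟩)
    · exact h
    · omega
  · obtain ⟨hle, heq⟩ := K2timesKn.ncard_cutEdges_of_ncard_le hn (A := Aᶜ) (by omega) (by omega)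
    rw [cutEdges_compl] at hle heq
    refine ⟨hle, heq.trans ⟨fun h => Or.inr ⟨by omega, h.2⟩, ?_⟩⟩
    rintro (⟨h, -⟩ | ⟨h, hiso⟩)
    · omega
    · exact ⟨by omega, hiso⟩
end

section
/- For every integer n ≥ 5, the direct product K₂ × K_n is super restricted edge-connected; that is, every minimum restricted edge-cut of K₂ × K_n is exactly the set of edges incident with exactly one endpoint of some single edge (its removal isolates an edge). -/
open SimpleGraph

/-!
Describe a vertex set `A` of `K₂ × Kₙ` by its two layers `A₀, A₁ ⊆ Kₙ`, with `p = |A₀|`,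
`q = |A₁|` and `t = |A₀ ∩ A₁|`. A vertex `(0, a)` with `a ∈ A₀` is joined to every `(1, b)` with
`b ∉ A₁` except `b = a`, so exactly `D = p(n - q) + q(n - p) - (p - t) - (q - t)` edges leave `A`.
For `n ≥ 5` and `2 ≤ |A| ≤ 2n - 2` this gives `D ≥ 2n - 4`, with equality only if `A` or its
complement has two vertices; isolating an edge costs exactly `2n - 4`. So if `F` is a minimum
restricted edge-cut, the vertex set of a component of `K₂ × Kₙ - F` (whose outgoing edges all
lie in `F`) or its complement has exactly two vertices, and a component on two vertices is an edge.
-/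

open Finset

namespace SimpleGraph

section General

variable {V : Type*} {G : SimpleGraph V}

lemma ConnectedComponent.supp_nontrivial_of_forall_exists_adj (h : ∀ x, ∃ y, G.Adj x y)
    (c : G.ConnectedComponent) : c.supp.Nontrivial := by
  induction c using ConnectedComponent.ind with
  | h x =>
    obtain ⟨y, hxy⟩ := h x
    exact ⟨x, rfl, y, ConnectedComponent.eq.2 hxy.symm.reachable, hxy.ne⟩

lemma ConnectedComponent.exists_adj_of_ncard_supp_eq_two (c : G.ConnectedComponent)
    (hc : c.supp.ncard = 2) : ∃ u v, G.Adj u v ∧ (G.connectedComponentMk u).supp = {u, v} := by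
  obtain ⟨u, v, huv, hc⟩ := Set.ncard_eq_two.1 hc
  have hu : u ∈ c.supp := hc ▸ Set.mem_insert u {v}
  have hv : v ∈ c.supp := hc ▸ Set.mem_insert_of_mem u rfl
  refine ⟨u, v, ?_, (c.mem_supp_iff u).1 hu ▸ hc⟩
  obtain ⟨p⟩ := c.reachable_of_mem_supp hu hv
  cases p with
  | nil => exact absurd rfl huv
  | @cons _ w _ huw _ =>
    have hw : w ∈ c.supp := c.mem_supp_of_adj_mem_supp hu huw
    rw [hc] at hw
    rcases hw with rfl | rfl
    · exact absurd huw G.irrefl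
    · exact huw

lemma exists_ne_connectedComponent [Nonempty V] (h : ¬G.Connected) :
    ∃ c d : G.ConnectedComponent, c ≠ d := by
  by_contra! h'
  exact h ⟨fun x y => ConnectedComponent.exact (h' _ _)⟩

lemma restrictedEdgeConn_le_card {F : Finset (Sym2 V)} (hF : IsRestrictedEdgeCut G F) :
    restrictedEdgeConn G ≤ #F :=
  sInf_le ⟨F, hF, rfl⟩

end General

section EdgeBoundary

variable {V : Type*} [Fintype V] [DecidableEq V] (G : SimpleGraph V) [DecidableRel G.Adj]

def edgeBoundary (s : Finset V) : Finset (Sym2 V) := (G.interedges s sᶜ).image fun e => Sym2.mk e.1 e.2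

variable {G} {s : Finset V}

lemma card_edgeBoundary : #(G.edgeBoundary s) = #(G.interedges s sᶜ) := by
  refine card_image_of_injOn fun x hx y hy hxy => ?_
  simp only [mem_coe, mem_interedges_iff, mem_compl] at hx hy
  rcases Sym2.eq_iff.1 hxy with ⟨h₁, h₂⟩ | ⟨h₁, -⟩
  · exact Prod.ext h₁ h₂
  · exact absurd (h₁ ▸ hx.1) hy.2.1

lemma edgeBoundary_subset_edgeSet : ↑(G.edgeBoundary s) ⊆ G.edgeSet := by
  simp only [edgeBoundary, coe_image, Set.image_subset_iff]
  rintro ⟨x, y⟩ hxy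
  exact ((mem_interedges_iff G).1 hxy).2.2

lemma card_interedges_compl_le_card {F : Finset (Sym2 V)}
    (hs : ∀ x y, (G.deleteEdges F).Adj x y → x ∈ s → y ∈ s) : #(G.interedges s sᶜ) ≤ #F := by
  rw [← card_edgeBoundary]
  refine card_le_card fun e he => ?_
  obtain ⟨⟨x, y⟩, hxy, rfl⟩ := mem_image.1 he
  rw [mem_interedges_iff, mem_compl] at hxy
  by_contra hF
  exact hxy.2.1 (hs x y (deleteEdges_adj.2 ⟨hxy.2.2, hF⟩) hxy.1)

lemma deleteEdges_edgeBoundary_adj {x y : V} :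
    (G.deleteEdges ↑(G.edgeBoundary s)).Adj x y ↔ G.Adj x y ∧ (x ∈ s ↔ y ∈ s) := by
  simp only [deleteEdges_adj, edgeBoundary, coe_image, Set.mem_image, mem_coe,
    mem_interedges_iff, mem_compl, Prod.exists, Sym2.eq_iff, not_exists, not_and]
  constructor
  · rintro ⟨hxy, h⟩
    refine ⟨hxy, ?_⟩
    by_contra hne
    by_cases hx : x ∈ s
    · exact h x y ⟨hx, by tauto, hxy⟩ (Or.inl ⟨rfl, rfl⟩)
    · exact h y x ⟨by tauto, hx, hxy.symm⟩ (Or.inr ⟨rfl, rfl⟩)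
  · rintro ⟨hxy, h⟩
    refine ⟨hxy, ?_⟩
    rintro a b ⟨ha, hb, -⟩ (⟨rfl, rfl⟩ | ⟨rfl, rfl⟩) <;> tauto

lemma isRestrictedEdgeCut_edgeBoundary (hs : s.Nonempty) (hsc : sᶜ.Nonempty)
    (h : ∀ x, ∃ y, G.Adj x y ∧ (x ∈ s ↔ y ∈ s)) : IsRestrictedEdgeCut G ↑(G.edgeBoundary s) := by
  refine ⟨edgeBoundary_subset_edgeSet, fun hconn => ?_,
    ConnectedComponent.supp_nontrivial_of_forall_exists_adj fun x =>
      (h x).imp fun _ => deleteEdges_edgeBoundary_adj.2⟩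
  obtain ⟨x, hx⟩ := hs
  obtain ⟨y, hy⟩ := hsc
  obtain ⟨p⟩ := hconn.preconnected x y
  obtain ⟨d, -, hd₁, hd₂⟩ := p.exists_boundary_dart s hx (mem_compl.1 hy)
  exact hd₂ ((deleteEdges_edgeBoundary_adj.1 d.adj).2.1 hd₁)

end EdgeBoundary

lemma card_interedges_top_add_card_inter {α : Type*} [DecidableEq α] (s t : Finset α) :
    #((⊤ : SimpleGraph α).interedges s t) + #(s ∩ t) = #s * #t := by
  rw [← Rel.card_interedges_add_card_interedges_compl (⊤ : SimpleGraph α).Adj s t]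
  have hdiag : Rel.interedges (fun x y => ¬(⊤ : SimpleGraph α).Adj x y) s t =
      (s ∩ t).image fun a => (a, a) := by
    ext ⟨a, b⟩
    simp only [Rel.mk_mem_interedges_iff, top_adj, not_not, mem_image, mem_inter, Prod.mk.injEq]
    constructor
    · rintro ⟨ha, hb, rfl⟩
      exact ⟨a, ⟨ha, hb⟩, rfl, rfl⟩
    · rintro ⟨a, ⟨ha, hb⟩, rfl, rfl⟩
      exact ⟨ha, hb, rfl⟩
  rw [hdiag, card_image_of_injective _ fun a b h => (Prod.mk.inj h).1]
  rfl

end SimpleGraph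

instance {α β : Type*} (G : SimpleGraph α) (H : SimpleGraph β) [DecidableRel G.Adj]
    [DecidableRel H.Adj] : DecidableRel (tensorProd G H).Adj :=
  fun x y => inferInstanceAs (Decidable (G.Adj x.1 y.1 ∧ H.Adj x.2 y.2))

def layer {ι α : Type*} [Fintype α] [DecidableEq ι] [DecidableEq α] (A : Finset (ι × α))
    (i : ι) : Finset α :=
  {a | (i, a) ∈ A}

section Layer

variable {α : Type*} [Fintype α] [DecidableEq α]

lemma layer_compl {ι : Type*} [Fintype ι] [DecidableEq ι] (A : Finset (ι × α)) (i : ι) :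
    layer Aᶜ i = (layer A i)ᶜ := by
  ext a; simp [layer]

lemma card_layer_zero_add_card_layer_one (A : Finset (Fin 2 × α)) :
    #(layer A 0) + #(layer A 1) = #A := by
  simp only [layer, card_filter]
  rw [← Fin.sum_univ_two (f := fun i => ∑ a : α, if (i, a) ∈ A then 1 else 0),
    ← Fintype.sum_prod_type' (f := fun i a => if (i, a) ∈ A then 1 else 0)]
  simp

lemma card_interedges_tensorProd_completeGraph_fin_two (H : SimpleGraph α) [DecidableRel H.Adj]
    (s t : Finset (Fin 2 × α)) :
    #((tensorProd (completeGraph (Fin 2)) H).interedges s t) =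
      #(H.interedges (layer s 0) (layer t 1)) + #(H.interedges (layer s 1) (layer t 0)) := by
  let e : Fin 2 → Fin 2 → α × α → (Fin 2 × α) × (Fin 2 × α) := fun i j p => ((i, p.1), (j, p.2))
  have he : ∀ i j, Function.Injective (e i j) := fun i j p q h => by
    simp only [e, Prod.mk.injEq, true_and] at h
    exact Prod.ext h.1 h.2
  have hsplit : (tensorProd (completeGraph (Fin 2)) H).interedges s t =
      (H.interedges (layer s 0) (layer t 1)).image (e 0 1) ∪
        (H.interedges (layer s 1) (layer t 0)).image (e 1 0) := by
    ext ⟨⟨i, a⟩, ⟨j, b⟩⟩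
    fin_cases i <;> fin_cases j <;> simp [e, mem_interedges_iff, tensorProd, layer]
  rw [hsplit, card_union_of_disjoint, card_image_of_injective _ (he 0 1),
    card_image_of_injective _ (he 1 0)]
  simp [Finset.disjoint_left, e]

end Layer

/-- `2 (D - (2m - 4)) = (p - q)² + (p + q - 2)(2m - 4 - p - q) + 4t`
`= (p - q)² + (p + q - 4)(2m - 2 - p - q) + 4(t - (p + q - m))`, where `D` is the right-hand side;
the first form is positive for `p + q ≤ m`, the second for `p + q > m`. -/
lemma two_mul_sub_four_lt {m p q t : ℤ} (hm : 5 ≤ m) (ht : 0 ≤ t) (hpq : p + q ≤ m + t)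
    (h₁ : 3 ≤ p + q) (h₂ : p + q ≤ 2 * m - 3) :
    2 * m - 4 < p * (m - q) + q * (m - p) - (p - t) - (q - t) := by
  rcases le_or_gt (p + q) m with h | h
  · nlinarith [sq_nonneg (p - q),
      mul_pos (by linarith : (0 : ℤ) < p + q - 2) (by linarith : (0 : ℤ) < 2 * m - 4 - (p + q))]
  · nlinarith [sq_nonneg (p - q),
      mul_pos (by linarith : (0 : ℤ) < p + q - 4) (by linarith : (0 : ℤ) < 2 * m - 2 - (p + q))]

instance (n : ℕ) : DecidableRel (K2timesKn n).Adj :=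
  inferInstanceAs (DecidableRel (tensorProd _ _).Adj)

namespace K2timesKn

variable {n : ℕ}

lemma card_interedges_compl_add_card_sdiff_add_card_sdiff (A : Finset (Fin 2 × Fin n)) :
    #((K2timesKn n).interedges A Aᶜ) + #(layer A 0 \ layer A 1) + #(layer A 1 \ layer A 0) =
      #(layer A 0) * #(layer A 1)ᶜ + #(layer A 1) * #(layer A 0)ᶜ := by
  have h₀ := card_interedges_top_add_card_inter (layer A 0) (layer A 1)ᶜ
  have h₁ := card_interedges_top_add_card_inter (layer A 1) (layer A 0)ᶜ
  have hK : #((K2timesKn n).interedges A Aᶜ) =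
      #((⊤ : SimpleGraph (Fin n)).interedges (layer A 0) (layer Aᶜ 1)) +
        #((⊤ : SimpleGraph (Fin n)).interedges (layer A 1) (layer Aᶜ 0)) :=
    card_interedges_tensorProd_completeGraph_fin_two _ A Aᶜ
  rw [← sdiff_eq_inter_compl] at h₀ h₁
  rw [hK, layer_compl, layer_compl]
  omega

lemma card_eq_two_or_card_compl_eq_two (hn : 5 ≤ n) {A : Finset (Fin 2 × Fin n)}
    (hA : 2 ≤ #A) (hAc : 2 ≤ #Aᶜ) (hD : #((K2timesKn n).interedges A Aᶜ) ≤ 2 * n - 4) :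
    #A = 2 ∨ #Aᶜ = 2 := by
  have hcount := card_interedges_compl_add_card_sdiff_add_card_sdiff A
  rw [card_compl, card_compl, card_sdiff, card_sdiff, inter_comm, Fintype.card_fin] at hcount
  set p := #(layer A 0)
  set q := #(layer A 1)
  set t := #(layer A 0 ∩ layer A 1)
  have hsize : #A = p + q := (card_layer_zero_add_card_layer_one A).symm
  have hcompl : #Aᶜ = 2 * n - (p + q) := by simp [card_compl, hsize]
  have hunion : p + q ≤ n + t := by
    have := card_union_add_card_inter (layer A 0) (layer A 1)
    have := card_le_univ (layer A 0 ∪ layer A 1)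
    simp only [Fintype.card_fin] at this
    omega
  have htp : t ≤ p := card_le_card inter_subset_left
  have htq : t ≤ q := card_le_card inter_subset_right
  by_contra! hne
  have hlt := two_mul_sub_four_lt (m := n) (p := p) (q := q) (t := t) (by exact_mod_cast hn)
    (by positivity) (by exact_mod_cast hunion) (by omega) (by omega)
  zify [(by omega : q ≤ n), (by omega : p ≤ n), htp, htq] at hcount
  zify [(by omega : 4 ≤ 2 * n)] at hD
  linarith

lemma card_interedges_edge_compl {a b : Fin n} (hab : a ≠ b) :
    #((K2timesKn n).interedges {(0, a), (1, b)} {(0, a), (1, b)}ᶜ) = 2 * n - 4 := by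
  have hcount := card_interedges_compl_add_card_sdiff_add_card_sdiff {(0, a), (1, b)}
  have h₀ : layer ({(0, a), (1, b)} : Finset (Fin 2 × Fin n)) 0 = {a} := by ext; simp [layer]
  have h₁ : layer ({(0, a), (1, b)} : Finset (Fin 2 × Fin n)) 1 = {b} := by ext; simp [layer]
  rw [h₀, h₁, sdiff_singleton_eq_erase, sdiff_singleton_eq_erase,
    erase_eq_of_notMem (notMem_singleton.2 hab.symm), erase_eq_of_notMem (notMem_singleton.2 hab)]
    at hcount
  simp only [card_compl, card_singleton, Fintype.card_fin] at hcount
  omega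

lemma isRestrictedEdgeCut_edgeBoundary_edge (hn : 4 ≤ n) {a b : Fin n} (hab : a ≠ b) :
    IsRestrictedEdgeCut (K2timesKn n) ↑((K2timesKn n).edgeBoundary {(0, a), (1, b)}) := by
  refine isRestrictedEdgeCut_edgeBoundary ⟨(0, a), by simp⟩ ⟨(0, b), by simp [hab.symm]⟩ ?_
  rintro ⟨i, c⟩
  by_cases hc : (i, c) ∈ ({(0, a), (1, b)} : Finset (Fin 2 × Fin n))
  · simp only [mem_insert, mem_singleton, Prod.mk.injEq] at hc
    rcases hc with ⟨rfl, rfl⟩ | ⟨rfl, rfl⟩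
    · exact ⟨(1, b), ⟨zero_ne_one, hab⟩, by simp⟩
    · exact ⟨(0, a), ⟨one_ne_zero, hab.symm⟩, by simp⟩
  · obtain ⟨d, -, hd⟩ := exists_mem_notMem_of_card_lt_card (s := {a, b, c}) (t := univ)
      (by simpa using card_le_three.trans_lt (by omega))
    obtain ⟨j, hj⟩ := exists_ne i
    simp only [mem_insert, mem_singleton, not_or] at hd
    exact ⟨(j, d), ⟨hj.symm, Ne.symm hd.2.2⟩, by simp [hc, hd.1, hd.2.1]⟩

lemma restrictedEdgeConn_le (hn : 4 ≤ n) : restrictedEdgeConn (K2timesKn n) ≤ (2 * n - 4 : ℕ) := by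
  have hab : (⟨0, by omega⟩ : Fin n) ≠ ⟨1, by omega⟩ := by simp
  calc restrictedEdgeConn (K2timesKn n)
      ≤ #((K2timesKn n).edgeBoundary {(0, ⟨0, by omega⟩), (1, ⟨1, by omega⟩)}) :=
        restrictedEdgeConn_le_card (isRestrictedEdgeCut_edgeBoundary_edge hn hab)
    _ = (2 * n - 4 : ℕ) := by rw [card_edgeBoundary, card_interedges_edge_compl hab]

end K2timesKn

theorem stmt2 (n : ℕ) (hn : 5 ≤ n) : SuperRestrictedEdgeConnected (K2timesKn n) := by
  classical
  rintro F ⟨-, hdisc, hnt⟩ hF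
  have : Nonempty (Fin 2 × Fin n) := ⟨(0, ⟨0, by omega⟩)⟩
  obtain ⟨c, d, hcd⟩ := exists_ne_connectedComponent hdisc
  set A := c.supp.toFinset
  have hdA : d.supp ⊆ ↑Aᶜ := fun x hx => by
    simpa [A] using fun hxc => hcd (ConnectedComponent.eq_of_common_vertex hxc hx)
  have hD : #((K2timesKn n).interedges A Aᶜ) ≤ 2 * n - 4 := by
    have hF' : (#F : ℕ∞) ≤ (2 * n - 4 : ℕ) := hF ▸ K2timesKn.restrictedEdgeConn_le (by omega)
    refine (card_interedges_compl_le_card fun x y hxy hx => ?_).trans (by exact_mod_cast hF')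
    exact Set.mem_toFinset.2 (c.mem_supp_of_adj_mem_supp (Set.mem_toFinset.1 hx) hxy)
  obtain ⟨e, he⟩ : ∃ e : ((K2timesKn n).deleteEdges ↑F).ConnectedComponent, e.supp.ncard = 2 := by
    rcases K2timesKn.card_eq_two_or_card_compl_eq_two hn
      (one_lt_card_iff_nontrivial.2 (by simpa [A] using hnt c))
      (one_lt_card_iff_nontrivial.2 ((hnt d).mono hdA)) hD with h | h
    · exact ⟨c, by rw [Set.ncard_eq_toFinset_card', h]⟩
    · refine ⟨d, le_antisymm ?_ (Set.one_lt_ncard_iff_nontrivial.2 (hnt d))⟩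
      calc d.supp.ncard ≤ (↑Aᶜ : Set _).ncard := Set.ncard_le_ncard hdA
        _ = 2 := by rw [Set.ncard_coe_finset, h]
  exact e.exists_adj_of_ncard_supp_eq_two he
end

section
/- Let n ≥ 3 be an integer and let 𝒢 = K₂ × T_n, the direct product of K₂ with the total graph T_n; equivalently, 𝒢 is the complete bipartite graph K_{n,n}. Then for every vertex subset A of 𝒢 with 2 ≤ |A| ≤ 2n − 2, the number of edges of 𝒢 with exactly one endpoint in A satisfies |[A, V(𝒢) \ A]| ≥ 2(n − 1); moreover, equality holds if and only if either (i) |A| = 2 and the subgraph of 𝒢 induced by A is isomorphic to K₂, or (ii) |A| = 2n − 2 and the subgraph of 𝒢 induced by V(𝒢) \ A is isomorphic to K₂. -/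
open SimpleGraph

/-! If `A` has `a` vertices on one side of `K_{n,n}` and `b` on the other, it cuts
`a (n - b) + (n - a) b` edges, and `2 (a (n - b) + (n - a) b) - 4 (n - 1)` equals
`(a - b)² + (a + b - 2) (2n - 2 - a - b)`. For `2 ≤ a + b ≤ 2n - 2` both terms are nonnegative, and
they vanish exactly when `a = b = 1` or `a = b = n - 1`: when `A`, respectively its complement,
is one vertex from each side, i.e. induces `K₂`. -/

section

variable {β : Type*}

lemma ncard_eq_ncard_preimage_mk_add [Finite β] (B : Set (Fin 2 × β)) :
    B.ncard = (Prod.mk 0 ⁻¹' B).ncard + (Prod.mk 1 ⁻¹' B).ncard := by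
  have hB : B = Prod.mk 0 '' (Prod.mk 0 ⁻¹' B) ∪ Prod.mk 1 '' (Prod.mk 1 ⁻¹' B) := by
    ext ⟨i, u⟩
    fin_cases i <;> simp
  have hdisj :
      Disjoint (Prod.mk (0 : Fin 2) '' (Prod.mk 0 ⁻¹' B)) (Prod.mk 1 '' (Prod.mk 1 ⁻¹' B)) := by
    simp [Set.disjoint_left]
  conv_lhs => rw [hB]
  rw [Set.ncard_union_eq hdisj, Set.ncard_image_of_injective _ (Prod.mk_right_injective _),
    Set.ncard_image_of_injective _ (Prod.mk_right_injective _)]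

def bipartiteEdge (p : β × β) : Sym2 (Fin 2 × β) := s((0, p.1), (1, p.2))

lemma bipartiteEdge_injective : Function.Injective (bipartiteEdge (β := β)) := by
  rintro ⟨u, v⟩ ⟨u', v'⟩ h
  simpa [bipartiteEdge] using h

end

lemma two_mul_sub_one_le_mul_sub_add_sub_mul {N a b : ℕ} (ha : a ≤ N) (hb : b ≤ N)
    (h2 : 2 ≤ a + b) (h2N : a + b ≤ 2 * N - 2) :
    2 * (N - 1) ≤ a * (N - b) + (N - a) * b ∧
    (a * (N - b) + (N - a) * b = 2 * (N - 1) ↔ a = 1 ∧ b = 1 ∨ a = N - 1 ∧ b = N - 1) := by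
  have hN : 1 ≤ N := by omega
  zify [ha, hb, hN] at h2N ⊢
  have hsq : 0 ≤ ((a : ℤ) - b) ^ 2 := sq_nonneg _
  have hprod : 0 ≤ ((a : ℤ) + b - 2) * (2 * N - 2 - (a + b)) := mul_nonneg (by omega) (by omega)
  have key : 2 * ((a : ℤ) * (N - b) + (N - a) * b) =
      (a - b) ^ 2 + (a + b - 2) * (2 * N - 2 - (a + b)) + 4 * (N - 1) := by ring
  refine ⟨by linarith, fun h => ?_, ?_⟩
  · have hab : (a : ℤ) = b := by nlinarith
    rw [← hab] at hprod key h
    have : ((a : ℤ) + a - 2) * (2 * N - 2 - (a + a)) = 0 := by nlinarith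
    rcases mul_eq_zero.mp this with h' | h' <;> omega
  · rintro (⟨ha', hb'⟩ | ⟨ha', hb'⟩) <;> rw [ha', hb'] <;> ring

variable {n : ℕ}

lemma K2timesTn_adj {x y : Fin 2 × Fin n} : (K2timesTn n).Adj x y ↔ x.1 ≠ y.1 := Iff.rfl

lemma cutEdges_K2timesTn (A : Set (Fin 2 × Fin n)) :
    cutEdges (K2timesTn n) A = bipartiteEdge ''
      ((Prod.mk 0 ⁻¹' A) ×ˢ (Prod.mk 1 ⁻¹' A)ᶜ ∪ (Prod.mk 0 ⁻¹' A)ᶜ ×ˢ (Prod.mk 1 ⁻¹' A)) := by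
  ext e
  constructor
  · rintro ⟨he, ⟨i, u⟩, ⟨j, v⟩, rfl, hu, hv⟩
    rw [SimpleGraph.mem_edgeSet, K2timesTn_adj] at he
    dsimp only at he
    obtain ⟨rfl, rfl⟩ | ⟨rfl, rfl⟩ : i = 0 ∧ j = 1 ∨ i = 1 ∧ j = 0 := by omega
    · exact ⟨(u, v), by simp [hu, hv], rfl⟩
    · exact ⟨(v, u), by simp [hu, hv], Sym2.eq_swap⟩
  · rintro ⟨⟨u, v⟩, huv, rfl⟩
    refine ⟨by simp [bipartiteEdge, K2timesTn_adj], ?_⟩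
    rcases huv with ⟨hu, hv⟩ | ⟨hu, hv⟩
    · exact ⟨(0, u), (1, v), rfl, hu, hv⟩
    · exact ⟨(1, v), (0, u), Sym2.eq_swap, hv, hu⟩

lemma ncard_cutEdges_K2timesTn (A : Set (Fin 2 × Fin n)) :
    (cutEdges (K2timesTn n) A).ncard =
      (Prod.mk 0 ⁻¹' A).ncard * (n - (Prod.mk 1 ⁻¹' A).ncard) +
        (n - (Prod.mk 0 ⁻¹' A).ncard) * (Prod.mk 1 ⁻¹' A).ncard := by
  have hdisj : Disjoint ((Prod.mk 0 ⁻¹' A) ×ˢ (Prod.mk 1 ⁻¹' A)ᶜ)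
      ((Prod.mk 0 ⁻¹' A)ᶜ ×ˢ (Prod.mk 1 ⁻¹' A)) :=
    Set.disjoint_prod.mpr (Or.inl disjoint_compl_right)
  rw [cutEdges_K2timesTn, Set.ncard_image_of_injective _ bipartiteEdge_injective,
    Set.ncard_union_eq hdisj, Set.ncard_prod, Set.ncard_prod, Set.ncard_compl, Set.ncard_compl,
    Nat.card_fin]

lemma nonempty_induce_iso_completeGraph_two_iff (B : Set (Fin 2 × Fin n)) :
    Nonempty ((K2timesTn n).induce B ≃g completeGraph (Fin 2)) ↔
      ∀ i, (Prod.mk i ⁻¹' B).ncard = 1 := by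
  constructor
  · rintro ⟨e⟩
    have hcard : B.ncard = 2 := by
      rw [← Nat.card_coe_set_eq, Nat.card_congr e.toEquiv, Nat.card_fin]
    have hadj : (e.symm 0).1.1 ≠ (e.symm 1).1.1 := e.symm.map_rel_iff.mpr (by simp)
    have hfiber : ∀ x : B, (Prod.mk x.1.1 ⁻¹' B).Nonempty := fun x => ⟨x.1.2, x.2⟩
    have hpos : ∀ i, 0 < (Prod.mk i ⁻¹' B).ncard := by
      intro i
      rw [Set.ncard_pos]
      obtain rfl | rfl : i = (e.symm 0).1.1 ∨ i = (e.symm 1).1.1 := by omega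
      exacts [hfiber _, hfiber _]
    rw [ncard_eq_ncard_preimage_mk_add] at hcard
    have := hpos 0
    have := hpos 1
    rw [Fin.forall_fin_two]
    omega
  · intro h
    choose u hu using fun i => Set.ncard_eq_one.mp (h i)
    have hmem : ∀ i v, (i, v) ∈ B ↔ v = u i := fun i v => Set.ext_iff.mp (hu i) v
    refine ⟨⟨Equiv.ofBijective (fun x => x.1.1) ⟨?_, fun i => ?_⟩, Iff.rfl⟩⟩
    · rintro ⟨⟨i, v⟩, hv⟩ ⟨⟨j, w⟩, hw⟩ (rfl : i = j)
      rw [hmem] at hv hw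
      simp [hv, hw]
    · exact ⟨⟨(i, u i), (hmem i _).mpr rfl⟩, rfl⟩

theorem stmt5_general (n : ℕ) (A : Set (Fin 2 × Fin n))
    (hA2 : 2 ≤ A.ncard) (hA2n : A.ncard ≤ 2 * n - 2) :
    2 * (n - 1) ≤ (cutEdges (K2timesTn n) A).ncard ∧
    ((cutEdges (K2timesTn n) A).ncard = 2 * (n - 1) ↔
      (A.ncard = 2 ∧ Nonempty ((K2timesTn n).induce A ≃g completeGraph (Fin 2))) ∨
      (A.ncard = 2 * n - 2 ∧
        Nonempty ((K2timesTn n).induce Aᶜ ≃g completeGraph (Fin 2)))) := by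
  have hfiber_le : ∀ i, (Prod.mk i ⁻¹' A).ncard ≤ n := fun i =>
    (Set.ncard_le_card _).trans_eq (Nat.card_fin n)
  have hfiber_compl : ∀ i, (Prod.mk i ⁻¹' Aᶜ).ncard = n - (Prod.mk i ⁻¹' A).ncard := fun i => by
    rw [Set.preimage_compl, Set.ncard_compl, Nat.card_fin]
  rw [ncard_eq_ncard_preimage_mk_add] at hA2 hA2n ⊢
  rw [ncard_cutEdges_K2timesTn, nonempty_induce_iso_completeGraph_two_iff,
    nonempty_induce_iso_completeGraph_two_iff, Fin.forall_fin_two, Fin.forall_fin_two,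
    hfiber_compl, hfiber_compl]
  obtain ⟨hle, heq⟩ := two_mul_sub_one_le_mul_sub_add_sub_mul (hfiber_le 0) (hfiber_le 1) hA2 hA2n
  refine ⟨hle, heq.trans ⟨fun h => ?_, fun h => ?_⟩⟩ <;> omega

theorem stmt5 (n : ℕ) (hn : 3 ≤ n) (A : Set (Fin 2 × Fin n))
    (hA2 : 2 ≤ A.ncard) (hA2n : A.ncard ≤ 2 * n - 2) :
    2 * (n - 1) ≤ (cutEdges (K2timesTn n) A).ncard ∧
    ((cutEdges (K2timesTn n) A).ncard = 2 * (n - 1) ↔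
      (A.ncard = 2 ∧ Nonempty ((K2timesTn n).induce A ≃g completeGraph (Fin 2))) ∨
      (A.ncard = 2 * n - 2 ∧
        Nonempty ((K2timesTn n).induce Aᶜ ≃g completeGraph (Fin 2)))) :=
  stmt5_general n A hA2 hA2n
end

section
/- Let G be a connected graph with at least two vertices and let n ≥ 3 be an integer. If G is maximally restricted edge-connected (λ′-optimal), i.e., λ′(G) = ξ(G), then the direct product G × T_n is super restricted edge-connected. -/
open SimpleGraph

/-!
Let `F` be a minimum restricted edge-cut of `G × Tₙ`, `X` a component of `G × Tₙ − F`, and `x u`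
the number of copies `(u, i)` of `u` lying in `X`. Over an edge `uv` of `G` exactly
`x u (n - x v) + x v (n - x u)` edges join `X` to its complement, and all of them lie in `F`; so
their total `W(x)` is at most `|F| = λ'(G × Tₙ) ≤ n (ξ(G) + 2) - 2`, the last bound coming from
isolating an edge `(u, 0)(v, 0)` with `d(u) + d(v) - 2 = ξ(G)`.

Such a cheap profile forces `x` or `n - x` to be `1` at the ends of an edge of `G` and `0`
elsewhere. If two adjacent vertices `g, h` are split (`0 < x < n`), the edges at them already weigh
`n (d(g) + d(h)) - 2 ≥ n (ξ(G) + 2) - 2`, and equality pins `x` down. If a split vertex `s` has no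
split neighbour, it has a full neighbour `a` and an empty neighbour `z`; the edges `sa`, `sz` weigh
`n²` together, and they lie in a set of at least `ξ(G) + 1` edges of weight `≥ n` each: either a
restricted edge-cut of `G` together with `sa` (here `λ'(G) = ξ(G)` is used) or the edges at `s` and
`z`. If nothing is split, `{x = n}` determines a restricted edge-cut of `G` whose edges weigh `n²`.
Hence `X` or its complement has two vertices, and being a union of components it is a `K₂`.
-/

open Finset

namespace SimpleGraph

section Closed

variable {α : Type*} {G : SimpleGraph α}

theorem Reachable.mem_of_forall_adj {S : Set α} (hS : ∀ a ∈ S, ∀ b, G.Adj a b → b ∈ S)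
    {p q : α} (h : G.Reachable p q) (hp : p ∈ S) : q ∈ S := by
  by_contra hq
  obtain ⟨w⟩ := h
  obtain ⟨d, -, hd₁, hd₂⟩ := w.exists_boundary_dart S hp hq
  exact hd₂ (hS _ hd₁ _ d.adj)

theorem Connected.mem_of_forall_adj (hG : G.Connected) {S : Set α}
    (hS : ∀ a ∈ S, ∀ b, G.Adj a b → b ∈ S) {p : α} (hp : p ∈ S) (q : α) : q ∈ S :=
  (hG p q).mem_of_forall_adj hS hp

theorem compl_forall_adj {S : Set α} (hS : ∀ a ∈ S, ∀ b, G.Adj a b → b ∈ S) :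
    ∀ a ∈ Sᶜ, ∀ b, G.Adj a b → b ∈ Sᶜ :=
  fun _ ha _ hab hb => ha (hS _ hb _ hab.symm)

theorem ConnectedComponent.supp_forall_adj (C : G.ConnectedComponent) :
    ∀ a ∈ C.supp, ∀ b, G.Adj a b → b ∈ C.supp :=
  fun _ ha _ hab => C.mem_supp_of_adj_mem_supp ha hab

theorem exists_adj_of_supp_nontrivial {p : α}
    (h : (G.connectedComponentMk p).supp.Nontrivial) : ∃ q, G.Adj p q := by
  obtain ⟨q, hq, hqp⟩ := h.exists_ne p
  exact mem_support_of_reachable (Ne.symm hqp) (ConnectedComponent.exact hq).symm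

theorem exists_adj_supp_eq_pair {S : Set α} (hS : ∀ a ∈ S, ∀ b, G.Adj a b → b ∈ S)
    (hS₂ : S.ncard = 2) (h : ∀ C : G.ConnectedComponent, C.supp.Nontrivial) :
    ∃ p q, G.Adj p q ∧ (G.connectedComponentMk p).supp = {p, q} := by
  obtain ⟨p, q, hpq, rfl⟩ := Set.ncard_eq_two.mp hS₂
  have hsub : (G.connectedComponentMk p).supp ⊆ {p, q} := fun r hr =>
    (ConnectedComponent.exact hr).symm.mem_of_forall_adj hS (Set.mem_insert p _)
  obtain ⟨r, hpr⟩ := exists_adj_of_supp_nontrivial (h _)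
  obtain rfl : r = q := (hS p (Set.mem_insert p _) r hpr).resolve_left hpr.ne'
  refine ⟨p, r, hpr, hsub.antisymm ?_⟩
  rintro s (rfl | rfl)
  · exact ConnectedComponent.connectedComponentMk_mem
  · exact (G.connectedComponentMk p).mem_supp_of_adj_mem_supp
      ConnectedComponent.connectedComponentMk_mem hpr

end Closed

section Cut

variable {α : Type*} {G : SimpleGraph α} {B : Set α}

theorem cutEdges_subset_edgeSet : cutEdges G B ⊆ G.edgeSet := fun _ he => he.1

theorem mk_mem_cutEdges_iff {u v : α} :
    s(u, v) ∈ cutEdges G B ↔ G.Adj u v ∧ ¬(u ∈ B ↔ v ∈ B) := by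
  simp only [cutEdges, Set.mem_ofPred_eq, mem_edgeSet, Sym2.eq_iff]
  constructor
  · rintro ⟨huv, a, b, (⟨rfl, rfl⟩ | ⟨rfl, rfl⟩), ha, hb⟩ <;> tauto
  · rintro ⟨huv, h⟩
    by_cases hu : u ∈ B
    · exact ⟨huv, u, v, Or.inl ⟨rfl, rfl⟩, hu, fun hv => h ⟨fun _ => hv, fun _ => hu⟩⟩
    · exact ⟨huv, v, u, Or.inr ⟨rfl, rfl⟩, by tauto, hu⟩

theorem deleteEdges_cutEdges_adj {u v : α} :
    (G.deleteEdges (cutEdges G B)).Adj u v ↔ G.Adj u v ∧ (u ∈ B ↔ v ∈ B) := by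
  rw [deleteEdges_adj, mk_mem_cutEdges_iff]
  tauto

theorem isRestrictedEdgeCut_cutEdges {b c : α} (hb : b ∈ B) (hc : c ∉ B)
    (hnb : ∀ v, ∃ w, G.Adj v w ∧ (v ∈ B ↔ w ∈ B)) :
    IsRestrictedEdgeCut G (cutEdges G B) := by
  refine ⟨cutEdges_subset_edgeSet, fun hconn => hc ?_, fun C => ?_⟩
  · exact Reachable.mem_of_forall_adj
      (fun a ha w haw => (deleteEdges_cutEdges_adj.mp haw).2.mp ha) (hconn.preconnected b c) hb
  · obtain ⟨v, rfl⟩ := C.exists_rep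
    obtain ⟨w, hvw, hiff⟩ := hnb v
    have hadj : (G.deleteEdges (cutEdges G B)).Adj v w :=
      deleteEdges_cutEdges_adj.mpr ⟨hvw, hiff⟩
    exact ⟨v, ConnectedComponent.connectedComponentMk_mem, w,
      ConnectedComponent.connectedComponentMk_eq_of_adj hadj.symm, hadj.ne⟩

theorem cutEdges_subset_of_forall_adj {F : Set (Sym2 α)}
    (hB : ∀ a ∈ B, ∀ b, (G.deleteEdges F).Adj a b → b ∈ B) : cutEdges G B ⊆ F := by
  rintro e ⟨he, u, v, rfl, hu, hv⟩
  by_contra hF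
  exact hv (hB u hu v (deleteEdges_adj.mpr ⟨he, hF⟩))

theorem Connected.cutEdges_nonempty (hG : G.Connected) {b c : α} (hb : b ∈ B) (hc : c ∉ B) :
    (cutEdges G B).Nonempty := by
  obtain ⟨w⟩ := hG b c
  obtain ⟨d, -, hd₁, hd₂⟩ := w.exists_boundary_dart B hb hc
  exact ⟨d.edge, d.edge_mem, d.fst, d.snd, rfl, hd₁, hd₂⟩

theorem restrictedEdgeConn_le_ncard [Finite α] {F : Set (Sym2 α)}
    (hF : IsRestrictedEdgeCut G F) : restrictedEdgeConn G ≤ F.ncard := by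
  refine sInf_le ⟨F.toFinite.toFinset, by simpa using hF, ?_⟩
  rw [Set.ncard_eq_toFinset_card F]

theorem card_incidenceFinset_union_add_one [Fintype α] [DecidableEq α] [DecidableRel G.Adj]
    {a b : α} (h : G.Adj a b) :
    #(G.incidenceFinset a ∪ G.incidenceFinset b) + 1 = G.degree a + G.degree b := by
  have hinter : G.incidenceFinset a ∩ G.incidenceFinset b = {s(a, b)} := by
    rw [← coe_inj, coe_inter, coe_incidenceFinset, coe_incidenceFinset,
      incidenceSet_inter_incidenceSet_of_adj G h, coe_singleton]
  rw [← card_incidenceFinset_eq_degree, ← card_incidenceFinset_eq_degree,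
    ← card_union_add_card_inter, hinter, card_singleton]

theorem ncard_cutEdges_pair [Fintype α] [DecidableEq α] [DecidableRel G.Adj] {a b : α}
    (h : G.Adj a b) : (cutEdges G {a, b}).ncard = G.degree a + G.degree b - 2 := by
  have hcut : cutEdges G {a, b} = (G.incidenceSet a ∪ G.incidenceSet b) \ {s(a, b)} := by
    ext e
    induction e using Sym2.ind with
    | h u v =>
      simp only [mk_mem_cutEdges_iff, Set.mem_sdiff, Set.mem_union, mk'_mem_incidenceSet_iff,
        Set.mem_singleton_iff, Sym2.eq_iff, Set.mem_insert_iff]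
      have hab := h.ne
      by_cases huv : G.Adj u v
      · have := huv.ne
        grind
      · simp [huv]
  rw [hcut, Set.ncard_sdiff_singleton_of_mem
      (Set.mem_union_left _ (G.mk'_mem_incidenceSet_left_iff.mpr h)),
    ← coe_incidenceFinset, ← coe_incidenceFinset, ← Finset.coe_union, Set.ncard_coe_finset]
  have := card_incidenceFinset_union_add_one h
  omega

end Cut

section EdgeDegree

variable {α : Type*} {G : SimpleGraph α}

theorem minEdgeDegree_le_ncard_cutEdges [Finite α]
    (hopt : restrictedEdgeConn G = minEdgeDegree G) {B : Set α} {b c : α} (hb : b ∈ B)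
    (hc : c ∉ B) (hnb : ∀ v, ∃ w, G.Adj v w ∧ (v ∈ B ↔ w ∈ B)) :
    minEdgeDegree G ≤ (cutEdges G B).ncard := by
  have h := restrictedEdgeConn_le_ncard (isRestrictedEdgeCut_cutEdges hb hc hnb)
  rw [hopt] at h
  exact_mod_cast h

variable [Fintype α] [DecidableRel G.Adj]

theorem ncard_neighborSet (v : α) : (G.neighborSet v).ncard = G.degree v := by
  rw [degree, neighborFinset_def, Set.ncard_eq_toFinset_card']

theorem minEdgeDegree_le {u v : α} (h : G.Adj u v) :
    minEdgeDegree G ≤ G.degree u + G.degree v - 2 :=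
  Nat.sInf_le ⟨u, v, h, by rw [ncard_neighborSet, ncard_neighborSet]⟩

theorem exists_minEdgeDegree_eq {u v : α} (h : G.Adj u v) :
    ∃ a b, G.Adj a b ∧ G.degree a + G.degree b - 2 = minEdgeDegree G := by
  obtain ⟨a, b, hab, he⟩ := Nat.sInf_mem (s := {k | ∃ u v, G.Adj u v ∧
    (G.neighborSet u).ncard + (G.neighborSet v).ncard - 2 = k}) ⟨_, u, v, h, rfl⟩
  exact ⟨a, b, hab, by rwa [← ncard_neighborSet, ← ncard_neighborSet]⟩

theorem restrictedEdgeConn_le_degree_add_degree [DecidableEq α] {a b c : α} (h : G.Adj a b)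
    (hc : c ∉ ({a, b} : Set α))
    (hnb : ∀ v ∉ ({a, b} : Set α), ∃ w ∉ ({a, b} : Set α), G.Adj v w) :
    restrictedEdgeConn G ≤ (G.degree a + G.degree b - 2 : ℕ) := by
  rw [← ncard_cutEdges_pair h]
  refine restrictedEdgeConn_le_ncard (isRestrictedEdgeCut_cutEdges (Set.mem_insert a _) hc
    fun v => ?_)
  by_cases hv : v ∈ ({a, b} : Set α)
  · rcases hv with rfl | rfl
    · exact ⟨b, h, by simp⟩
    · exact ⟨a, h.symm, by simp⟩
  · obtain ⟨w, hw, hvw⟩ := hnb v hv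
    exact ⟨w, hvw, iff_of_false hv hw⟩

end EdgeDegree

section TotalProd

variable {V : Type*} {G : SimpleGraph V} {n : ℕ}

theorem totalProd_degree [Fintype V] [DecidableRel G.Adj] (p : V × Fin n)
    [Fintype ((totalProd G n).neighborSet p)] :
    (totalProd G n).degree p = n * G.degree p.1 := by
  have h : (totalProd G n).neighborFinset p = G.neighborFinset p.1 ×ˢ univ := by
    ext q
    simp only [mem_neighborFinset, mem_product, mem_univ, and_true]
    rfl
  rw [← card_neighborFinset_eq_degree, h, card_product, card_univ, Fintype.card_fin,
    card_neighborFinset_eq_degree, mul_comm]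

theorem restrictedEdgeConn_totalProd_le [Fintype V] [DecidableRel G.Adj] (hn : 2 ≤ n)
    (hadj : ∀ u, ∃ w, G.Adj u w) {u v : V} (huv : G.Adj u v) :
    restrictedEdgeConn (totalProd G n) ≤ (n * (minEdgeDegree G + 2) - 2 : ℕ) := by
  classical
  obtain ⟨a, b, hab, hξ⟩ := exists_minEdgeDegree_eq huv
  let i₀ : Fin n := ⟨0, by omega⟩
  let i₁ : Fin n := ⟨1, by omega⟩
  have hlayer : ∀ p : V × Fin n, p.2 = i₁ →
      p ∉ ({(a, i₀), (b, i₀)} : Set (V × Fin n)) := by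
    rintro ⟨w, i⟩ rfl (h | h) <;> simp [i₀, i₁, Fin.ext_iff] at h
  have h := restrictedEdgeConn_le_degree_add_degree (G := totalProd G n) (c := (a, i₁))
    (show (totalProd G n).Adj (a, i₀) (b, i₀) from hab) (hlayer _ rfl) fun p _ => by
      obtain ⟨w, hw⟩ := hadj p.1
      exact ⟨(w, i₁), hlayer _ rfl, hw⟩
  have ha := hab.degree_pos_left
  have hb := hab.degree_pos_right
  rw [totalProd_degree, totalProd_degree] at h
  convert h using 3
  rw [← hξ, Nat.sub_add_cancel (by omega), mul_add]

end TotalProd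

end SimpleGraph

/-- If `a` of the `n` copies of `u` and `b` of the `n` copies of `v` lie in a vertex set `X` of
`G × Tₙ`, then this many of the `n²` edges over an edge `uv` of `G` join `X` to its complement. -/
def pairWeight (n a b : ℕ) : ℕ := a * (n - b) + b * (n - a)

section PairWeight

variable {n a b : ℕ}

theorem pairWeight_comm (n a b : ℕ) : pairWeight n a b = pairWeight n b a := add_comm _ _

theorem pairWeight_flip (ha : a ≤ n) (hb : b ≤ n) :
    pairWeight n (n - a) (n - b) = pairWeight n a b := by
  rw [pairWeight, pairWeight, Nat.sub_sub_self ha, Nat.sub_sub_self hb, mul_comm, add_comm,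
    mul_comm (n - b)]

theorem pairWeight_eq_zero_iff (ha : a ≤ n) (hb : b ≤ n) :
    pairWeight n a b = 0 ↔ (a = 0 ∧ b = 0) ∨ (a = n ∧ b = n) := by
  simp only [pairWeight, Nat.add_eq_zero_iff, Nat.mul_eq_zero]
  omega

theorem le_pairWeight (ha₀ : 0 < a) (ha : a < n) (hb : b ≤ n) : n ≤ pairWeight n a b := by
  have key : (pairWeight n a b : ℤ) - n = (a - 1) * (n - b) + b * (n - 1 - a) := by
    simp only [pairWeight]; push_cast [Nat.cast_sub hb, Nat.cast_sub ha.le]; ring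
  have h₁ : (0 : ℤ) ≤ (a - 1) * (n - b) := mul_nonneg (by omega) (by omega)
  have h₂ : (0 : ℤ) ≤ b * (n - 1 - a) := mul_nonneg (by omega) (by omega)
  omega

theorem pairWeight_eq_zero_or_le (ha : a ≤ n) (hb : b ≤ n) :
    pairWeight n a b = 0 ∨ n ≤ pairWeight n a b := by
  rcases Nat.eq_zero_or_pos a with rfl | ha₀
  · rcases Nat.eq_zero_or_pos b with rfl | hb₀
    · simp [pairWeight]
    · right; simpa [pairWeight] using Nat.le_mul_of_pos_left n hb₀
  rcases ha.lt_or_eq with ha' | rfl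
  · exact Or.inr (le_pairWeight ha₀ ha' hb)
  rcases hb.lt_or_eq with hb' | rfl
  · right; simpa [pairWeight] using Nat.le_mul_of_pos_right a (Nat.sub_pos_of_lt hb')
  · simp [pairWeight]

theorem pairWeight_one_left_eq_self (hn : 3 ≤ n) (hb : b ≤ n) (h : pairWeight n 1 b = n) :
    b = 0 := by
  have key : (pairWeight n 1 b : ℤ) = n + b * (n - 2) := by
    simp only [pairWeight]; push_cast [Nat.cast_sub hb, Nat.cast_sub (by omega : 1 ≤ n)]; ring
  have : (b : ℤ) * (n - 2) = 0 := by omega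
  rcases mul_eq_zero.mp this with h | h <;> omega

theorem pairWeight_sub_two_mul_sub_two (ha : a ≤ n) (hb : b ≤ n) :
    (pairWeight n a b : ℤ) - (2 * n - 2) = (a - 1) * (n - 1 - b) + (b - 1) * (n - 1 - a) := by
  simp only [pairWeight]; push_cast [Nat.cast_sub hb, Nat.cast_sub ha]; ring

theorem two_mul_sub_two_le_pairWeight (ha₀ : 0 < a) (ha : a < n) (hb₀ : 0 < b) (hb : b < n) :
    2 * n - 2 ≤ pairWeight n a b := by
  have key := pairWeight_sub_two_mul_sub_two ha.le hb.le
  have h₁ : (0 : ℤ) ≤ (a - 1) * (n - 1 - b) := mul_nonneg (by omega) (by omega)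
  have h₂ : (0 : ℤ) ≤ (b - 1) * (n - 1 - a) := mul_nonneg (by omega) (by omega)
  omega

theorem pairWeight_eq_two_mul_sub_two (hn : 3 ≤ n) (ha₀ : 0 < a) (ha : a < n) (hb₀ : 0 < b)
    (hb : b < n) (h : pairWeight n a b = 2 * n - 2) :
    (a = 1 ∧ b = 1) ∨ (a = n - 1 ∧ b = n - 1) := by
  have key := pairWeight_sub_two_mul_sub_two ha.le hb.le
  have h₁ : (0 : ℤ) ≤ (a - 1) * (n - 1 - b) := mul_nonneg (by omega) (by omega)
  have h₂ : (0 : ℤ) ≤ (b - 1) * (n - 1 - a) := mul_nonneg (by omega) (by omega)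
  have e₁ : ((a : ℤ) - 1) * (n - 1 - b) = 0 := by omega
  have e₂ : ((b : ℤ) - 1) * (n - 1 - a) = 0 := by omega
  rcases mul_eq_zero.mp e₁ with e₁ | e₁ <;> rcases mul_eq_zero.mp e₂ with e₂ | e₂ <;>
    omega

end PairWeight

def edgeWeight {V : Type*} (n : ℕ) (x : V → ℕ) : Sym2 V → ℕ :=
  Sym2.lift ⟨fun u v => pairWeight n (x u) (x v), fun _ _ => pairWeight_comm n _ _⟩

@[simp]
theorem edgeWeight_mk {V : Type*} (n : ℕ) (x : V → ℕ) (u v : V) :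
    edgeWeight n x s(u, v) = pairWeight n (x u) (x v) := rfl

theorem edgeWeight_flip {V : Type*} {n : ℕ} {x : V → ℕ} (hx : ∀ u, x u ≤ n) :
    edgeWeight n (fun u => n - x u) = edgeWeight n x := by
  ext e
  induction e using Sym2.ind with
  | h u v => exact pairWeight_flip (hx u) (hx v)

namespace SimpleGraph

variable {V : Type*} {G : SimpleGraph V} {n : ℕ} {x : V → ℕ}

theorem sum_edgeFinset_eq_sum_adj [Fintype V] [DecidableEq V] [DecidableRel G.Adj]
    {M : Type*} [AddCommMonoid M] (φ : V → V → M) :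
    ∑ e ∈ G.edgeFinset, Sym2.lift ⟨fun u v => φ u v + φ v u, fun _ _ => add_comm _ _⟩ e =
      ∑ p ∈ univ.filter (fun p : V × V => G.Adj p.1 p.2), φ p.1 p.2 := by
  rw [← sum_fiberwise_of_maps_to (g := fun p : V × V => s(p.1, p.2)) (t := G.edgeFinset)
    (by simp)]
  refine sum_congr rfl fun e he => ?_
  induction e using Sym2.ind with
  | h u v =>
    have huv : G.Adj u v := mem_edgeFinset.mp he
    have hfib : {p ∈ univ.filter (fun p : V × V => G.Adj p.1 p.2) | s(p.1, p.2) = s(u, v)} =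
        {(u, v), (v, u)} := by
      ext ⟨a, b⟩
      simp only [mem_filter, mem_univ, true_and, Sym2.eq_iff, mem_insert, mem_singleton,
        Prod.mk.injEq]
      constructor
      · exact fun h => h.2
      · rintro (⟨rfl, rfl⟩ | ⟨rfl, rfl⟩)
        · exact ⟨huv, Or.inl ⟨rfl, rfl⟩⟩
        · exact ⟨huv.symm, Or.inr ⟨rfl, rfl⟩⟩
    rw [hfib, sum_pair (by simp [huv.ne])]
    rfl

def layerWeight (G : SimpleGraph V) [Fintype G.edgeSet] (n : ℕ) (x : V → ℕ) : ℕ :=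
  ∑ e ∈ G.edgeFinset, edgeWeight n x e

theorem layerWeight_eq_sum_adj [Fintype V] [DecidableEq V] [DecidableRel G.Adj] :
    layerWeight G n x =
      ∑ p ∈ univ.filter (fun p : V × V => G.Adj p.1 p.2), x p.1 * (n - x p.2) :=
  sum_edgeFinset_eq_sum_adj fun u v => x u * (n - x v)

/-- The layer counts of a vertex set `X` of `G × Tₙ` such that `[X, Xᶜ]` is a restricted
edge-cut (see `isCutProfile_layerCount`). -/
structure IsCutProfile (G : SimpleGraph V) (n : ℕ) (x : V → ℕ) : Prop where
  le : ∀ u, x u ≤ n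
  exists_pos : ∃ u, 0 < x u
  exists_lt : ∃ u, x u < n
  exists_adj_pos : ∀ u, 0 < x u → ∃ w, G.Adj u w ∧ 0 < x w
  exists_adj_lt : ∀ u, x u < n → ∃ w, G.Adj u w ∧ x w < n

theorem IsCutProfile.exists_adj (hx : IsCutProfile G n x) (hn : 0 < n) (u : V) :
    ∃ w, G.Adj u w := by
  rcases Nat.eq_zero_or_pos (x u) with h | h
  · exact (hx.exists_adj_lt u (by omega)).imp fun _ h => h.1
  · exact (hx.exists_adj_pos u h).imp fun _ h => h.1

theorem le_edgeWeight_of_mem (hx : ∀ u, x u ≤ n) {v : V} (hv : 0 < x v ∧ x v < n)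
    {e : Sym2 V} (he : v ∈ e) : n ≤ edgeWeight n x e := by
  obtain ⟨w, rfl⟩ := Sym2.mem_iff_exists.mp he
  exact le_pairWeight hv.1 hv.2 (hx w)

def strandedFull (G : SimpleGraph V) (n : ℕ) (x : V → ℕ) : Set V :=
  {v | x v = n ∧ ∀ w, G.Adj v w → x w = 0}

/-- The support `{x > 0}`, modified so that every vertex has a neighbour on its own side while
every crossing edge still has weight at least `n`. -/
def repairedSupport (G : SimpleGraph V) (n : ℕ) (x : V → ℕ) : Set V :=
  {v | (0 < x v ∧ v ∉ strandedFull G n x) ∨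
    (x v = 0 ∧ ∀ w, G.Adj v w → 0 < x w ∧ w ∉ strandedFull G n x)}

theorem notMem_repairedSupport_iff (hn : 0 < n) {v : V} :
    v ∉ repairedSupport G n x ↔ v ∈ strandedFull G n x ∨
      (x v = 0 ∧ ∃ w, G.Adj v w ∧ (x w = 0 ∨ w ∈ strandedFull G n x)) := by
  constructor
  · intro h
    rcases Nat.eq_zero_or_pos (x v) with h0 | h0
    · refine Or.inr ⟨h0, by_contra fun hall => h (Or.inr ⟨h0, fun w hw => ?_⟩)⟩
      exact ⟨Nat.pos_of_ne_zero fun hw0 => hall ⟨w, hw, Or.inl hw0⟩,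
        fun hws => hall ⟨w, hw, Or.inr hws⟩⟩
    · exact Or.inl (by_contra fun hs => h (Or.inl ⟨h0, hs⟩))
  · rintro (hvs | ⟨hv, w, hvw, hw⟩) (⟨h0, hs⟩ | ⟨h0, hall⟩)
    · exact hs hvs
    · have := hvs.1
      omega
    · omega
    · rcases hw with hw | hw
      · have := (hall w hvw).1
        omega
      · exact (hall w hvw).2 hw

theorem IsCutProfile.exists_adj_mem_repairedSupport_iff (hx : IsCutProfile G n x) (hn : 0 < n)
    (v : V) :
    ∃ w, G.Adj v w ∧ (v ∈ repairedSupport G n x ↔ w ∈ repairedSupport G n x) := by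
  by_cases hv : v ∈ repairedSupport G n x
  · rcases hv with ⟨hv, hvs⟩ | ⟨hv, hvw⟩
    · obtain ⟨w, hvw, hw⟩ := hx.exists_adj_pos v hv
      refine ⟨w, hvw, iff_of_true (Or.inl ⟨hv, hvs⟩) (Or.inl ⟨hw, fun hws => ?_⟩)⟩
      have := hws.2 v hvw.symm
      omega
    · obtain ⟨w, hw⟩ := hx.exists_adj hn v
      exact ⟨w, hw, iff_of_true (Or.inr ⟨hv, hvw⟩) (Or.inl (hvw w hw))⟩
  · refine (?_ : ∃ w, G.Adj v w ∧ w ∉ repairedSupport G n x).imp fun w hw =>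
      ⟨hw.1, iff_of_false hv hw.2⟩
    rcases (notMem_repairedSupport_iff hn).mp hv with hvs | ⟨hv, w, hvw, hw⟩
    · obtain ⟨w, hw⟩ := hx.exists_adj hn v
      exact ⟨w, hw, (notMem_repairedSupport_iff hn).mpr
        (Or.inr ⟨hvs.2 w hw, v, hw.symm, Or.inr hvs⟩)⟩
    · refine ⟨w, hvw, (notMem_repairedSupport_iff hn).mpr ?_⟩
      rcases hw with hw | hws
      · exact Or.inr ⟨hw, v, hvw.symm, Or.inl hv⟩
      · exact Or.inl hws

theorem le_edgeWeight_of_mem_cutEdges (hx : ∀ u, x u ≤ n) (hn : 0 < n) {e : Sym2 V}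
    (he : e ∈ cutEdges G (repairedSupport G n x)) : n ≤ edgeWeight n x e := by
  obtain ⟨he, u, v, rfl, hu, hv⟩ := he
  refine (pairWeight_eq_zero_or_le (hx u) (hx v)).resolve_left fun h0 => ?_
  rcases (pairWeight_eq_zero_iff (hx u) (hx v)).mp h0 with ⟨hu0, hv0⟩ | ⟨hun, hvn⟩
  · rcases hu with ⟨hu, -⟩ | ⟨-, hu⟩
    · omega
    · have := (hu v he).1
      omega
  · rcases (notMem_repairedSupport_iff hn).mp hv with hvs | ⟨hv0, -⟩
    · have := hvs.2 u (G.mem_edgeSet.mp he).symm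
      omega
    · omega

section LayerWeight

variable [Fintype V] [DecidableRel G.Adj]

theorem ncard_mul_le_layerWeight {F : Set (Sym2 V)} (hF : F ⊆ G.edgeSet) {m : ℕ}
    (hm : ∀ e ∈ F, m ≤ edgeWeight n x e) : F.ncard * m ≤ layerWeight G n x := by
  rw [Set.ncard_eq_toFinset_card F, ← smul_eq_mul]
  exact (card_nsmul_le_sum _ _ _ (by simpa using hm)).trans
    (sum_le_sum_of_subset (by simpa using hF))

theorem lt_layerWeight_of_two_valued (hopt : restrictedEdgeConn G = minEdgeDegree G)
    (hG : G.Connected) (hn : 3 ≤ n) (hx : IsCutProfile G n x) (h2 : ∀ u, x u = 0 ∨ x u = n) :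
    n * (minEdgeDegree G + 2) - 2 < layerWeight G n x := by
  obtain ⟨b, hb⟩ := hx.exists_pos
  obtain ⟨c, hc⟩ := hx.exists_lt
  have hc : ¬0 < x c := by rcases h2 c with h | h <;> omega
  have hnb : ∀ v, ∃ w, G.Adj v w ∧ (0 < x v ↔ 0 < x w) := by
    intro v
    rcases h2 v with h | h
    · obtain ⟨w, hvw, hw⟩ := hx.exists_adj_lt v (by omega)
      exact ⟨w, hvw, by rcases h2 w with h' | h' <;> omega⟩
    · obtain ⟨w, hvw, hw⟩ := hx.exists_adj_pos v (by omega)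
      exact ⟨w, hvw, by omega⟩
  have hξ := minEdgeDegree_le_ncard_cutEdges (B := {v | 0 < x v}) hopt hb hc hnb
  have hpos := (hG.cutEdges_nonempty (B := {v | 0 < x v}) hb hc).ncard_pos
  have hW := ncard_mul_le_layerWeight (G := G) (n := n) (x := x) (m := n * n)
    (cutEdges_subset_edgeSet (B := {v | 0 < x v}))
    (by
      rintro e ⟨-, u, v, rfl, hu, hv⟩
      have hu : x u = n := by rcases h2 u with h | h <;> simp_all
      have hv : x v = 0 := by simpa using hv
      simp [pairWeight, hu, hv])
  have : 2 ≤ n * (minEdgeDegree G + 2) := by nlinarith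
  have : n * (minEdgeDegree G + 2) ≤ (cutEdges G {v | 0 < x v}).ncard * (n * n) := by
    nlinarith
  omega

variable [DecidableEq V]

theorem lt_layerWeight_of_subset (hn : 3 ≤ n) {s a z : V} (hsa : G.Adj s a) (hsz : G.Adj s z)
    (ha : x a = n) (hz : x z = 0) (hs : x s ≤ n) {T : Finset (Sym2 V)} (hT : T ⊆ G.edgeFinset)
    (hsaT : s(s, a) ∈ T) (hszT : s(s, z) ∈ T)
    (hwt : ∀ e ∈ T, e ≠ s(s, a) → e ≠ s(s, z) → n ≤ edgeWeight n x e)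
    (hcard : minEdgeDegree G + 1 ≤ #T) :
    n * (minEdgeDegree G + 2) - 2 < layerWeight G n x := by
  have hne : s(s, z) ≠ s(s, a) := fun h => by
    rcases Sym2.eq_iff.mp h with ⟨-, rfl⟩ | ⟨-, rfl⟩
    · omega
    · exact hsz.ne rfl
  have hszT' : s(s, z) ∈ T.erase s(s, a) := mem_erase.mpr ⟨hne, hszT⟩
  have hW : ∑ e ∈ T, edgeWeight n x e ≤ layerWeight G n x := sum_le_sum_of_subset hT
  rw [← add_sum_erase _ _ hsaT, ← add_sum_erase _ _ hszT'] at hW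
  set R := (T.erase s(s, a)).erase s(s, z)
  have hR : #R + 2 = #T := by
    rw [card_erase_of_mem hszT', card_erase_of_mem hsaT]
    have := card_pos.mpr ⟨_, hszT'⟩
    rw [card_erase_of_mem hsaT] at this
    omega
  have hRw : #R * n ≤ ∑ e ∈ R, edgeWeight n x e := by
    rw [← smul_eq_mul]
    refine card_nsmul_le_sum _ _ _ fun e he => ?_
    simp only [R, mem_erase] at he
    exact hwt e he.2.2 he.2.1 he.1
  have hpair : edgeWeight n x s(s, a) + edgeWeight n x s(s, z) = n * n := by
    simp only [edgeWeight_mk, pairWeight, ha, hz, Nat.sub_self, Nat.sub_zero, mul_zero, zero_mul,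
      add_zero, zero_add]
    rw [mul_comm (x s), ← mul_add, Nat.sub_add_cancel hs]
  have : 2 ≤ n * (minEdgeDegree G + 2) := by nlinarith
  have : n * (minEdgeDegree G + 2) ≤ n * n + #R * n := by nlinarith
  omega

theorem lt_layerWeight_of_adj_empty (hopt : restrictedEdgeConn G = minEdgeDegree G)
    (hn : 3 ≤ n) (hx : IsCutProfile G n x) {s a z w : V} (hs : 0 < x s) (hsa : G.Adj s a)
    (hsz : G.Adj s z) (ha : x a = n) (hz : x z = 0) (hzw : G.Adj z w) (hw : x w = 0) :
    n * (minEdgeDegree G + 2) - 2 < layerWeight G n x := by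
  have hn0 : 0 < n := by omega
  set B := repairedSupport G n x
  have hsB : s ∈ B := Or.inl ⟨hs, fun h => by have := h.2 a hsa; omega⟩
  have haB : a ∈ B := Or.inl ⟨by omega, fun h => by have := h.2 s hsa.symm; omega⟩
  have hzB : z ∉ B := (notMem_repairedSupport_iff hn0).mpr (Or.inr ⟨hz, w, hzw, Or.inl hw⟩)
  have hξ := minEdgeDegree_le_ncard_cutEdges hopt hsB hzB
    (hx.exists_adj_mem_repairedSupport_iff hn0)
  have hfin := (cutEdges G B).toFinite
  rw [Set.ncard_eq_toFinset_card _ hfin] at hξ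
  have hsa_cut : s(s, a) ∉ insert s(s, z) hfin.toFinset := by
    simp only [mem_insert, Set.Finite.mem_toFinset, not_or]
    refine ⟨fun h => ?_, fun h => (mk_mem_cutEdges_iff.mp h).2 (iff_of_true hsB haB)⟩
    rcases Sym2.eq_iff.mp h with ⟨-, rfl⟩ | ⟨-, rfl⟩
    · omega
    · exact hsa.ne rfl
  refine lt_layerWeight_of_subset hn hsa hsz ha hz (hx.le s)
    (T := insert s(s, a) (insert s(s, z) hfin.toFinset)) ?_ (mem_insert_self _ _)
    (mem_insert_of_mem (mem_insert_self _ _)) (fun e he h₁ h₂ => ?_) ?_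
  · intro e he
    simp only [mem_insert, Set.Finite.mem_toFinset] at he
    rcases he with rfl | rfl | he
    · exact mem_edgeFinset.mpr hsa
    · exact mem_edgeFinset.mpr hsz
    · exact mem_edgeFinset.mpr (cutEdges_subset_edgeSet he)
  · simp only [mem_insert, Set.Finite.mem_toFinset, h₁, h₂, false_or] at he
    exact le_edgeWeight_of_mem_cutEdges hx.le hn0 he
  · rw [card_insert_of_notMem hsa_cut]
    have := card_le_card (subset_insert s(s, z) hfin.toFinset)
    omega

theorem lt_layerWeight_of_forall_adj_pos (hn : 3 ≤ n) (hx : ∀ u, x u ≤ n) {s a z : V}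
    (hs : 0 < x s ∧ x s < n) (hsa : G.Adj s a) (hsz : G.Adj s z) (ha : x a = n) (hz : x z = 0)
    (hzw : ∀ w, G.Adj z w → 0 < x w) :
    n * (minEdgeDegree G + 2) - 2 < layerWeight G n x := by
  refine lt_layerWeight_of_subset hn hsa hsz ha hz (hx s)
    (T := G.incidenceFinset s ∪ G.incidenceFinset z)
    (union_subset (G.incidenceFinset_subset s) (G.incidenceFinset_subset z))
    (mem_union_left _ (by simpa using hsa)) (mem_union_left _ (by simpa using hsz))
    (fun e he _ _ => ?_) ?_
  · rcases mem_union.mp he with he | he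
    · exact le_edgeWeight_of_mem hx hs ((mem_incidenceFinset _ _ _).mp he).2
    · obtain ⟨he, hze⟩ := (mem_incidenceFinset _ _ _).mp he
      obtain ⟨w, rfl⟩ := Sym2.mem_iff_exists.mp hze
      have := hzw w (G.mem_edgeSet.mp he)
      simp only [edgeWeight_mk, pairWeight, hz, zero_mul, Nat.sub_zero, zero_add]
      nlinarith
  · have := card_incidenceFinset_union_add_one hsz
    have := minEdgeDegree_le hsz
    have := hsa.degree_pos_left
    have := hsz.degree_pos_right
    omega

theorem sum_ite_mem_edgeFinset (v : V) :
    ∑ e ∈ G.edgeFinset, (if v ∈ e then n else 0) = n * G.degree v := by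
  rw [← sum_filter, ← incidenceFinset_eq_filter, sum_const, card_incidenceFinset_eq_degree,
    smul_eq_mul, mul_comm]

theorem edgeWeight_add_eq_of_adj_split (hx : ∀ u, x u ≤ n) {g h : V} (hgh : G.Adj g h)
    (hg : 0 < x g ∧ x g < n) (hh : 0 < x h ∧ x h < n)
    (hW : layerWeight G n x ≤ n * (minEdgeDegree G + 2) - 2) :
    ∀ e ∈ G.edgeFinset, edgeWeight n x e + (if e = s(g, h) then 2 else 0) =
      (if g ∈ e then n else 0) + (if h ∈ e then n else 0) := by
  have hle : ∀ e ∈ G.edgeFinset, (if g ∈ e then n else 0) + (if h ∈ e then n else 0) ≤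
      edgeWeight n x e + (if e = s(g, h) then 2 else 0) := by
    intro e _
    by_cases hge : g ∈ e <;> by_cases hhe : h ∈ e
    · obtain rfl := (Sym2.mem_and_mem_iff hgh.ne).mp ⟨hge, hhe⟩
      have := two_mul_sub_two_le_pairWeight hg.1 hg.2 hh.1 hh.2
      simp only [Sym2.mem_mk_left, Sym2.mem_mk_right, if_true, edgeWeight_mk]
      omega
    · have hne : e ≠ s(g, h) := by rintro rfl; exact hhe (Sym2.mem_mk_right _ _)
      simpa [hge, hhe, hne] using le_edgeWeight_of_mem hx hg hge
    · have hne : e ≠ s(g, h) := by rintro rfl; exact hge (Sym2.mem_mk_left _ _)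
      simpa [hge, hhe, hne] using le_edgeWeight_of_mem hx hh hhe
    · simp [hge, hhe]
  -- Summed over all edges, `hle` reads `n (d(g) + d(h)) ≤ W + 2 ≤ n (ξ + 2)`: it is tight.
  refine fun e he => ((sum_eq_sum_iff_of_le hle).mp (le_antisymm (sum_le_sum hle) ?_) e he).symm
  have hdeg := minEdgeDegree_le hgh
  have := hgh.degree_pos_left
  have := hgh.degree_pos_right
  rw [sum_add_distrib, sum_add_distrib, sum_ite_eq' G.edgeFinset, if_pos (mem_edgeFinset.mpr hgh),
    sum_ite_mem_edgeFinset, sum_ite_mem_edgeFinset, ← mul_add]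
  have : n * (minEdgeDegree G + 2) ≤ n * (G.degree g + G.degree h) :=
    Nat.mul_le_mul_left _ (by omega)
  change layerWeight G n x + 2 ≤ _
  have : 2 ≤ n * (minEdgeDegree G + 2) := by nlinarith
  omega

theorem sum_eq_two_of_edgeWeight_add_eq (hG : G.Connected) (hn : 3 ≤ n) (hx : ∀ u, x u ≤ n)
    {g h : V} (hgh : G.Adj g h) (hg : x g = 1) (hh : x h = 1)
    (heq : ∀ e ∈ G.edgeFinset, edgeWeight n x e + (if e = s(g, h) then 2 else 0) =
      (if g ∈ e then n else 0) + (if h ∈ e then n else 0)) :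
    ∑ u, x u = 2 := by
  have hstar : ∀ v ∈ ({g, h} : Set V), ∀ w, G.Adj v w → w ∉ ({g, h} : Set V) →
      x w = 0 := by
    intro v hv w hvw hw
    simp only [Set.mem_insert_iff, Set.mem_singleton_iff, not_or] at hv hw
    have := heq s(v, w) (mem_edgeFinset.mpr hvw)
    rcases hv with rfl | rfl
    · simp [hw.1, hw.2, Ne.symm hw.1, Ne.symm hw.2, hgh.ne, hgh.ne.symm, hg] at this
      exact pairWeight_one_left_eq_self hn (hx w) this
    · simp [hw.1, hw.2, Ne.symm hw.1, Ne.symm hw.2, hgh.ne, hgh.ne.symm, hh] at this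
      exact pairWeight_one_left_eq_self hn (hx w) this
  have hrest : ∀ u w, G.Adj u w → u ∉ ({g, h} : Set V) → w ∉ ({g, h} : Set V) →
      x u = x w := by
    intro u w huw hu hw
    simp only [Set.mem_insert_iff, Set.mem_singleton_iff, not_or] at hu hw
    have := heq s(u, w) (mem_edgeFinset.mpr huw)
    simp [hu.1, hu.2, hw.1, hw.2, Ne.symm hu.1, Ne.symm hu.2, Ne.symm hw.1, Ne.symm hw.2] at this
    rcases (pairWeight_eq_zero_iff (hx u) (hx w)).mp this with h | h <;> omega
  have hzero : ∀ w, w ∉ ({g, h} : Set V) → x w = 0 := fun w hw =>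
    (hG.mem_of_forall_adj (S := {v | v ∈ ({g, h} : Set V) ∨ x v = 0}) (by
      rintro v hv w hvw
      by_cases hw : w ∈ ({g, h} : Set V)
      · exact Or.inl hw
      · refine Or.inr ?_
        rcases hv with hv | hv
        · exact hstar v hv w hvw hw
        · have hv' : v ∉ ({g, h} : Set V) := by rintro (rfl | rfl) <;> omega
          rw [← hrest v w hvw hv' hw, hv]) (Or.inl (Set.mem_insert g _)) w).resolve_left hw
  rw [Fintype.sum_eq_add g h hgh.ne fun w hw => hzero w (by simpa using hw), hg, hh]

theorem sum_eq_two_of_adj_split (hG : G.Connected) (hn : 3 ≤ n) (hx : ∀ u, x u ≤ n) {g h : V}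
    (hgh : G.Adj g h) (hg : 0 < x g ∧ x g < n) (hh : 0 < x h ∧ x h < n)
    (hW : layerWeight G n x ≤ n * (minEdgeDegree G + 2) - 2) :
    ∑ u, x u = 2 ∨ ∑ u, (n - x u) = 2 := by
  have heq := edgeWeight_add_eq_of_adj_split hx hgh hg hh hW
  have hgh' := heq s(g, h) (mem_edgeFinset.mpr hgh)
  simp only [Sym2.mem_mk_left, Sym2.mem_mk_right, if_true, edgeWeight_mk] at hgh'
  rcases pairWeight_eq_two_mul_sub_two hn hg.1 hg.2 hh.1 hh.2 (by omega) with
    ⟨hg₁, hh₁⟩ | ⟨hg₁, hh₁⟩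
  · exact Or.inl (sum_eq_two_of_edgeWeight_add_eq hG hn hx hgh hg₁ hh₁ heq)
  · refine Or.inr (sum_eq_two_of_edgeWeight_add_eq hG hn (fun _ => Nat.sub_le _ _) hgh
      (by omega) (by omega) ?_)
    rwa [edgeWeight_flip hx]

theorem IsCutProfile.sum_eq_two (hopt : restrictedEdgeConn G = minEdgeDegree G)
    (hG : G.Connected) (hn : 3 ≤ n) (hx : IsCutProfile G n x)
    (hW : layerWeight G n x ≤ n * (minEdgeDegree G + 2) - 2) :
    ∑ u, x u = 2 ∨ ∑ u, (n - x u) = 2 := by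
  by_cases hsplit : ∃ g h, G.Adj g h ∧ (0 < x g ∧ x g < n) ∧ (0 < x h ∧ x h < n)
  · obtain ⟨g, h, hgh, hg, hh⟩ := hsplit
    exact sum_eq_two_of_adj_split hG hn hx.le hgh hg hh hW
  refine absurd hW (not_le.mpr ?_)
  by_cases hs : ∃ s, 0 < x s ∧ x s < n
  · obtain ⟨s, hs⟩ := hs
    have hnbr : ∀ w, G.Adj s w → x w = 0 ∨ x w = n := fun w hsw => by
      have := hx.le w
      by_contra
      exact hsplit ⟨s, w, hsw, hs, by omega, by omega⟩
    obtain ⟨a, hsa, ha⟩ := hx.exists_adj_pos s hs.1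
    obtain ⟨z, hsz, hz⟩ := hx.exists_adj_lt s hs.2
    replace ha : x a = n := (hnbr a hsa).resolve_left (by omega)
    replace hz : x z = 0 := (hnbr z hsz).resolve_right (by omega)
    by_cases hzw : ∃ w, G.Adj z w ∧ x w = 0
    · obtain ⟨w, hzw, hw⟩ := hzw
      exact lt_layerWeight_of_adj_empty hopt hn hx hs.1 hsa hsz ha hz hzw hw
    · exact lt_layerWeight_of_forall_adj_pos hn hx.le hs hsa hsz ha hz fun w hzw' =>
        Nat.pos_of_ne_zero fun hw => hzw ⟨w, hzw', hw⟩
  · exact lt_layerWeight_of_two_valued hopt hG hn hx fun u => by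
      have := hx.le u
      by_contra
      exact hs ⟨u, by omega, by omega⟩

end LayerWeight

section Layers

open scoped Classical in
noncomputable def layerCount (X : Set (V × Fin n)) (u : V) : ℕ := #{i | (u, i) ∈ X}

theorem layerCount_le (X : Set (V × Fin n)) (u : V) : layerCount X u ≤ n := by
  classical
  exact (card_filter_le _ _).trans (by simp)

theorem layerCount_pos_iff {X : Set (V × Fin n)} {u : V} :
    0 < layerCount X u ↔ ∃ i, (u, i) ∈ X := by
  classical
  simp [layerCount, card_pos, Finset.Nonempty]

theorem layerCount_compl (X : Set (V × Fin n)) (u : V) :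
    layerCount Xᶜ u = n - layerCount X u := by
  classical
  have := card_filter_add_card_filter_not (s := univ) (fun i : Fin n => (u, i) ∈ X)
  simp only [card_univ, Fintype.card_fin] at this
  simp only [layerCount, Set.mem_compl_iff]
  omega

theorem layerCount_lt_iff {X : Set (V × Fin n)} {u : V} :
    layerCount X u < n ↔ ∃ i, (u, i) ∉ X := by
  have h := layerCount_pos_iff (X := Xᶜ) (u := u)
  rw [layerCount_compl] at h
  simp only [Set.mem_compl_iff] at h
  have := layerCount_le X u
  exact ⟨fun hu => h.mp (by omega), fun hi => by have := h.mpr hi; omega⟩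

theorem sum_layerCount [Fintype V] (X : Set (V × Fin n)) : ∑ u, layerCount X u = X.ncard := by
  classical
  have hX : X = ↑(univ.filter (· ∈ X)) := by ext; simp
  conv_rhs => rw [hX, Set.ncard_coe_finset, card_filter, Fintype.sum_prod_type]
  simp only [layerCount, card_filter]

theorem ncard_cutEdges_totalProd [Fintype V] [DecidableEq V] [DecidableRel G.Adj]
    (X : Set (V × Fin n)) :
    (cutEdges (totalProd G n) X).ncard = layerWeight G n (layerCount X) := by
  classical
  set O := univ.filter fun z : (V × Fin n) × (V × Fin n) =>
    z.1 ∈ X ∧ z.2 ∉ X ∧ G.Adj z.1.1 z.2.1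
  have himage : cutEdges (totalProd G n) X = ↑(O.image fun z => s(z.1, z.2)) := by
    ext e
    constructor
    · rintro ⟨he, p, q, rfl, hp, hq⟩
      exact mem_image.mpr ⟨(p, q), mem_filter.mpr ⟨mem_univ _, hp, hq, he⟩, rfl⟩
    · intro he
      obtain ⟨⟨p, q⟩, hz, rfl⟩ := mem_image.mp he
      simp only [O, mem_filter, mem_univ, true_and] at hz
      exact ⟨hz.2.2, p, q, rfl, hz.1, hz.2.1⟩
  have hinj : Set.InjOn (fun z : (V × Fin n) × (V × Fin n) => s(z.1, z.2)) O := by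
    rintro ⟨p, q⟩ hz ⟨p', q'⟩ hz' h
    simp only [O, coe_filter, mem_univ, true_and, Set.mem_ofPred_eq] at hz hz'
    rcases Sym2.eq_iff.mp h with ⟨rfl, rfl⟩ | ⟨rfl, rfl⟩
    · rfl
    · exact absurd hz.1 hz'.2.1
  rw [himage, Set.ncard_coe_finset, card_image_of_injOn hinj, layerWeight_eq_sum_adj]
  simp_rw [← layerCount_compl]
  simp only [O, layerCount, card_filter, sum_filter, Fintype.sum_prod_type, sum_mul_sum]
  refine sum_congr rfl fun u _ => ?_
  rw [sum_comm]
  refine sum_congr rfl fun w _ => ?_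
  by_cases huw : G.Adj u w
  · simp only [huw, and_true, if_true, Set.mem_compl_iff]
    refine sum_congr rfl fun i _ => sum_congr rfl fun j _ => ?_
    split_ifs <;> simp_all
  · simp [huw]

theorem layerWeight_layerCount_le_ncard [Fintype V] [DecidableEq V] [DecidableRel G.Adj]
    {F : Set (Sym2 (V × Fin n))} (hF : F.Finite) {X : Set (V × Fin n)}
    (hX : ∀ a ∈ X, ∀ b, ((totalProd G n).deleteEdges F).Adj a b → b ∈ X) :
    layerWeight G n (layerCount X) ≤ F.ncard := by
  rw [← ncard_cutEdges_totalProd]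
  exact Set.ncard_le_ncard (cutEdges_subset_of_forall_adj hX) hF

theorem isCutProfile_layerCount {D : SimpleGraph (V × Fin n)} (hD : D ≤ totalProd G n)
    (hDadj : ∀ r, ∃ r', D.Adj r r') {X : Set (V × Fin n)}
    (hX : ∀ a ∈ X, ∀ b, D.Adj a b → b ∈ X)
    {p q : V × Fin n} (hp : p ∈ X) (hq : q ∉ X) : IsCutProfile G n (layerCount X) where
  le := layerCount_le X
  exists_pos := ⟨p.1, layerCount_pos_iff.mpr ⟨p.2, hp⟩⟩
  exists_lt := ⟨q.1, layerCount_lt_iff.mpr ⟨q.2, hq⟩⟩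
  exists_adj_pos u hu := by
    obtain ⟨i, hi⟩ := layerCount_pos_iff.mp hu
    obtain ⟨r, hr⟩ := hDadj (u, i)
    exact ⟨r.1, hD hr, layerCount_pos_iff.mpr ⟨r.2, hX _ hi _ hr⟩⟩
  exists_adj_lt u hu := by
    obtain ⟨i, hi⟩ := layerCount_lt_iff.mp hu
    obtain ⟨r, hr⟩ := hDadj (u, i)
    exact ⟨r.1, hD hr, layerCount_lt_iff.mpr ⟨r.2, compl_forall_adj hX _ hi _ hr⟩⟩

end Layers

end SimpleGraph

theorem stmt11_general {V : Type*} [Fintype V] (G : SimpleGraph V) (hG : G.Connected)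
    (n : ℕ) (hn : 3 ≤ n)
    (hopt : restrictedEdgeConn G = (minEdgeDegree G : ℕ∞)) :
    SuperRestrictedEdgeConnected (totalProd G n) := by
  classical
  rintro F ⟨-, hdisc, hnt⟩ hmin
  set D := (totalProd G n).deleteEdges ↑F
  have : Nonempty (V × Fin n) := ⟨(hG.nonempty.some, ⟨0, by omega⟩)⟩
  obtain ⟨p, q, hpq⟩ : ∃ p q, ¬D.Reachable p q := by
    by_contra! h
    exact hdisc ⟨h⟩
  set X := (D.connectedComponentMk p).supp
  have hX := (D.connectedComponentMk p).supp_forall_adj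
  have hx : IsCutProfile G n (layerCount X) :=
    isCutProfile_layerCount (deleteEdges_le _) (fun r => exists_adj_of_supp_nontrivial (hnt _)) hX
      ConnectedComponent.connectedComponentMk_mem fun hq => hpq (ConnectedComponent.exact hq).symm
  have hW : layerWeight G n (layerCount X) ≤ n * (minEdgeDegree G + 2) - 2 := by
    obtain ⟨u, hu⟩ := hx.exists_adj (by omega) hG.nonempty.some
    have hF := restrictedEdgeConn_totalProd_le (n := n) (by omega) (hx.exists_adj (by omega)) hu
    rw [← hmin] at hF
    have hWF := layerWeight_layerCount_le_ncard F.finite_toSet hX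
    rw [Set.ncard_coe_finset] at hWF
    exact hWF.trans (by exact_mod_cast hF)
  rcases hx.sum_eq_two hopt hG hn hW with h | h
  · exact exists_adj_supp_eq_pair hX (by rwa [← sum_layerCount]) hnt
  · refine exists_adj_supp_eq_pair (compl_forall_adj hX) ?_ hnt
    simpa [← sum_layerCount, layerCount_compl] using h

theorem stmt11 {V : Type*} [Fintype V] (G : SimpleGraph V) (hG : G.Connected)
    (hV : 2 ≤ Fintype.card V) (n : ℕ) (hn : 3 ≤ n)
    (hopt : restrictedEdgeConn G = (minEdgeDegree G : ℕ∞)) :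
    SuperRestrictedEdgeConnected (totalProd G n) :=
  stmt11_general G hG n hn hopt
end
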